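/- arXiv:1803.04521 — 6 statements merged into one kernel-verified Lean document; each statement's English description precedes it below -/
import Mathlib

section
/- Let N ≥ 2, l and m be nonnegative integers with 0 ≤ l ≤ N−1 and 1 ≤ m ≤ N. Then e^{(N−m)/(m(N−1))} ≤ E[exp(|X_l(m,N)|²/m²)] ≤ e, where the expectation equals C(N,m)^{−1} · Σ_{S ⊆ {1,…,N}, |S|=m} exp(|Σ_{n∈S} exp(−2πi n l/N)|²/m²). -/
open Real Finset
open scoped ComplexConjugate

lemma count_subsets {α : Type*} [DecidableEq α] (t u : Finset α) (m : ℕ)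
    (hu : u ⊆ t) (hm : u.card ≤ m) :
    ((t.powersetCard m).filter (fun S => u ⊆ S)).card
      = (t.card - u.card).choose (m - u.card) := by
  rw [← card_sdiff_of_subset hu, ← Finset.card_powersetCard]
  apply Finset.card_nbij' (fun S => S \ u) (fun S => S ∪ u)
  · intro S hS
    simp only [Finset.mem_coe, mem_filter, mem_powersetCard] at hS ⊢
    obtain ⟨⟨hSt, hSc⟩, huS⟩ := hS
    refine ⟨fun x hx => ?_, ?_⟩
    · simp only [mem_sdiff] at hx ⊢
      exact ⟨hSt hx.1, hx.2⟩
    · rw [card_sdiff_of_subset huS, hSc]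
  · intro S hS
    simp only [Finset.mem_coe, mem_powersetCard, mem_filter] at hS ⊢
    obtain ⟨hSt, hSc⟩ := hS
    have hdisj : Disjoint S u := by
      rw [Finset.disjoint_left]
      intro x hxS hxu
      exact (mem_sdiff.mp (hSt hxS)).2 hxu
    refine ⟨⟨?_, ?_⟩, subset_union_right⟩
    · exact union_subset (hSt.trans sdiff_subset) hu
    · rw [card_union_of_disjoint hdisj, hSc, Nat.sub_add_cancel hm]
  · intro S hS
    simp only [Finset.mem_coe, mem_filter, mem_powersetCard] at hS
    exact sdiff_union_of_subset hS.2
  · intro S hS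
    simp only [Finset.mem_coe, mem_powersetCard] at hS
    have hdisj : Disjoint S u := by
      rw [Finset.disjoint_left]
      intro x hxS hxu
      exact (mem_sdiff.mp (hS.1 hxS)).2 hxu
    exact union_sdiff_cancel_right hdisj

lemma sum_mul_conj {α : Type*} [DecidableEq α] (t : Finset α) (c : α → ℂ) (m : ℕ)
    (hm : 2 ≤ m) :
    ∑ S ∈ t.powersetCard m, (∑ n ∈ S, c n) * conj (∑ n ∈ S, c n)
      = ((t.card - 1).choose (m - 1) : ℂ) * ∑ n ∈ t, c n * conj (c n)
        + ((t.card - 2).choose (m - 2) : ℂ) *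
          ((∑ n ∈ t, c n) * conj (∑ n ∈ t, c n) - ∑ n ∈ t, c n * conj (c n)) := by
  set C1 : ℂ := ((t.card - 1).choose (m - 1) : ℂ) with hC1
  set C2 : ℂ := ((t.card - 2).choose (m - 2) : ℂ) with hC2
  set g : α → α → ℂ := fun n n' => c n * conj (c n') with hg
  have key : ∀ S ∈ t.powersetCard m,
      (∑ n ∈ S, c n) * conj (∑ n ∈ S, c n)
        = ∑ n ∈ t, ∑ n' ∈ t, if n ∈ S ∧ n' ∈ S then g n n' else 0 := by
    intro S hS
    rw [mem_powersetCard] at hS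
    have h1 : ∀ f : α → ℂ, ∑ n ∈ t, (if n ∈ S then f n else 0) = ∑ n ∈ S, f n := by
      intro f; rw [Finset.sum_ite_mem, Finset.inter_eq_right.mpr hS.1]
    have h2 : ∀ n ∈ t, (∑ n' ∈ t, if n ∈ S ∧ n' ∈ S then g n n' else 0)
        = if n ∈ S then ∑ n' ∈ t, (if n' ∈ S then g n n' else 0) else 0 := by
      intro n _
      by_cases h : n ∈ S <;> simp [h]
    rw [Finset.sum_congr rfl h2, h1]
    rw [Finset.sum_congr rfl (fun n _ => h1 (g n)), map_sum, Finset.sum_mul_sum]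
  rw [Finset.sum_congr rfl key, Finset.sum_comm]
  have swap2 : ∀ n ∈ t,
      (∑ S ∈ t.powersetCard m, ∑ n' ∈ t, if n ∈ S ∧ n' ∈ S then g n n' else 0)
        = ∑ n' ∈ t, ∑ S ∈ t.powersetCard m, (if n ∈ S ∧ n' ∈ S then g n n' else 0) :=
    fun n _ => Finset.sum_comm
  rw [Finset.sum_congr rfl swap2]
  have inner : ∀ n ∈ t, ∀ n' ∈ t,
      (∑ S ∈ t.powersetCard m, if n ∈ S ∧ n' ∈ S then g n n' else 0)
        = (if n = n' then C1 else C2) * g n n' := by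
    intro n hn n' hn'
    rw [Finset.sum_ite, Finset.sum_const, Finset.sum_const_zero, add_zero, nsmul_eq_mul]
    congr 1
    by_cases h : n = n'
    · subst h
      rw [if_pos rfl, hC1]
      have : (t.powersetCard m).filter (fun S => n ∈ S ∧ n ∈ S)
          = (t.powersetCard m).filter (fun S => ({n} : Finset α) ⊆ S) := by
        apply Finset.filter_congr; intro S _; simp
      rw [this, count_subsets t {n} m (by simpa using hn) (by simpa using hm.trans' one_le_two)]
      simp
    · rw [if_neg h, hC2]
      have : (t.powersetCard m).filter (fun S => n ∈ S ∧ n' ∈ S)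
          = (t.powersetCard m).filter (fun S => ({n, n'} : Finset α) ⊆ S) := by
        apply Finset.filter_congr; intro S _; simp [Finset.insert_subset_iff]
      rw [this, count_subsets t {n, n'} m (by simp [Finset.insert_subset_iff, hn, hn'])
        (by rwa [Finset.card_insert_of_notMem (by simpa using h), Finset.card_singleton])]
      rw [Finset.card_insert_of_notMem (by simpa using h), Finset.card_singleton]
  rw [Finset.sum_congr rfl (fun n hn => Finset.sum_congr rfl (inner n hn))]
  have per : ∀ n ∈ t, (∑ n' ∈ t, (if n = n' then C1 else C2) * g n n')
      = C2 * (∑ n' ∈ t, g n n') + (C1 - C2) * g n n := by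
    intro n hn
    rw [← Finset.sum_erase_add _ _ hn, ← Finset.sum_erase_add _ (fun n' => g n n') hn]
    have he : ∀ n' ∈ t.erase n, (if n = n' then C1 else C2) * g n n' = C2 * g n n' := by
      intro n' h
      rw [if_neg (Ne.symm (Finset.ne_of_mem_erase h))]
    rw [Finset.sum_congr rfl he, if_pos rfl, mul_add, Finset.mul_sum]
    ring
  rw [Finset.sum_congr rfl per, Finset.sum_add_distrib, ← Finset.mul_sum, ← Finset.mul_sum,
    ← Finset.sum_mul_sum, ← map_sum]
  ring

lemma geom_vanish (N l : ℕ) (hN : 2 ≤ N) (hl1 : 1 ≤ l) (hl : l ≤ N - 1) :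
    ∑ n ∈ Finset.Icc 1 N, Complex.exp (-(2 * Real.pi * n * l / N : ℝ) * Complex.I) = 0 := by
  have hN0 : (0:ℝ) < N := by positivity
  have hNC : (N:ℂ) ≠ 0 := by exact_mod_cast hN0.ne'
  set ζ : ℂ := Complex.exp (-(2 * Real.pi * l / N : ℝ) * Complex.I) with hζdef
  have hc : ∀ n : ℕ, Complex.exp (-(2 * Real.pi * n * l / N : ℝ) * Complex.I) = ζ ^ n := by
    intro n
    rw [hζdef, ← Complex.exp_nat_mul]
    congr 1
    push_cast
    ring
  have hζN : ζ ^ N = 1 := by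
    rw [← Complex.exp_nat_mul]
    have h : (N:ℂ) * (-((2 * Real.pi * l / N : ℝ) : ℂ) * Complex.I)
        = ((-l : ℤ) : ℂ) * (2 * Real.pi * Complex.I) := by
      push_cast
      field_simp
    rw [h, Complex.exp_int_mul_two_pi_mul_I]
  have hζ1 : ζ ≠ 1 := by
    rw [hζdef, Ne, Complex.exp_eq_one_iff]
    rintro ⟨k, hk⟩
    rw [Complex.ext_iff] at hk
    simp [Complex.mul_im] at hk
    have hR := hk
    have hlpos : (0:ℝ) < l := by exact_mod_cast hl1
    have hlN : (l:ℝ) < N := by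
      have : l < N := lt_of_le_of_lt hl (by omega)
      exact_mod_cast this
    have hpi : (0:ℝ) < 2 * Real.pi := by positivity
    have hk' : (k:ℝ) = -((l:ℝ)/N) := by
      field_simp at hR ⊢
      nlinarith [Real.pi_pos]
    have h1 : (0:ℝ) < (l:ℝ)/N := by positivity
    have h2 : (l:ℝ)/N < 1 := (div_lt_one hN0).mpr hlN
    have : (-1:ℤ) < k ∧ k < 0 := by
      constructor
      · exact_mod_cast show (-1:ℝ) < k by rw [hk']; linarith
      · exact_mod_cast show (k:ℝ) < 0 by rw [hk']; linarith
    omega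
  calc ∑ n ∈ Finset.Icc 1 N, Complex.exp (-(2 * Real.pi * n * l / N : ℝ) * Complex.I)
      = ∑ n ∈ Finset.Icc 1 N, ζ ^ n := Finset.sum_congr rfl fun n _ => hc n
    _ = ∑ n ∈ Finset.Ico 1 (N+1), ζ ^ n := by rw [Finset.Ico_add_one_right_eq_Icc]
    _ = ∑ n ∈ Finset.range N, ζ ^ (1 + n) := by
        rw [Finset.sum_Ico_eq_sum_range]; simp only [Nat.add_sub_cancel]
    _ = ζ * ∑ n ∈ Finset.range N, ζ ^ n := by
        rw [Finset.mul_sum]; exact Finset.sum_congr rfl fun n _ => by rw [pow_add, pow_one]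
    _ = 0 := by rw [geom_sum_eq hζ1, hζN]; simp

set_option maxHeartbeats 1000000 in
/-- Theorem 2.1 (i): for `X_l(m,N) = Σ_{n∈S} exp(-2πinl/N)` with `S` a uniformly random
`m`-element subset of `{1,…,N}`, one has
`e^{(N-m)/(m(N-1))} ≤ E[exp(|X_l(m,N)|²/m²)] ≤ e`. -/
theorem subGaussian_X_bounds (N l m : ℕ) (hN : 2 ≤ N) (hl : l ≤ N - 1)
    (hm1 : 1 ≤ m) (hmN : m ≤ N) :
    Real.exp (((N : ℝ) - m) / (m * ((N : ℝ) - 1))) ≤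
      ((N.choose m : ℝ))⁻¹ * ∑ S ∈ (Finset.Icc 1 N).powersetCard m,
        Real.exp ((Norm.norm (∑ n ∈ S,
          Complex.exp (-(2 * Real.pi * n * l / N : ℝ) * Complex.I))) ^ 2 / (m : ℝ) ^ 2) ∧
    ((N.choose m : ℝ))⁻¹ * ∑ S ∈ (Finset.Icc 1 N).powersetCard m,
        Real.exp ((Norm.norm (∑ n ∈ S,
          Complex.exp (-(2 * Real.pi * n * l / N : ℝ) * Complex.I))) ^ 2 / (m : ℝ) ^ 2) ≤
      Real.exp 1 := by
  have hN0 : (0:ℝ) < N := by positivity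
  have hm0 : (0:ℝ) < m := by exact_mod_cast hm1
  set c : ℕ → ℂ := fun n => Complex.exp (-(2 * Real.pi * n * l / N : ℝ) * Complex.I) with hc
  set T : Finset ℕ := Finset.Icc 1 N with hT
  have hTcard : T.card = N := by rw [hT, Nat.card_Icc]; omega
  have hcard : (T.powersetCard m).card = N.choose m := by
    rw [Finset.card_powersetCard, hTcard]
  have hCpos : (0:ℝ) < (N.choose m : ℝ) := by exact_mod_cast Nat.choose_pos hmN
  have habs1 : ∀ n : ℕ, ‖c n‖ = 1 := by
    intro n
    simp only [hc]
    rw [show (-((2 * Real.pi * n * l / N : ℝ) : ℂ) * Complex.I)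
        = ((-(2 * Real.pi * n * l / N : ℝ) : ℝ) : ℂ) * Complex.I by push_cast; ring]
    exact Complex.norm_exp_ofReal_mul_I _
  have habs : ∀ S ∈ T.powersetCard m, ‖∑ n ∈ S, c n‖ ≤ m := by
    intro S hS
    rw [mem_powersetCard] at hS
    calc ‖∑ n ∈ S, c n‖ ≤ ∑ n ∈ S, ‖c n‖ :=
          norm_sum_le _ _
      _ = m := by simp [habs1, hS.2]
  have hz_le : ∀ S ∈ T.powersetCard m,
      (‖∑ n ∈ S, c n‖)^2 / (m:ℝ)^2 ≤ 1 := by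
    intro S hS
    rw [div_le_one (by positivity)]
    have h := habs S hS
    nlinarith [norm_nonneg (∑ n ∈ S, c n)]
  have hupper : ((N.choose m : ℝ))⁻¹ * ∑ S ∈ T.powersetCard m,
      Real.exp ((‖∑ n ∈ S, c n‖) ^ 2 / (m : ℝ) ^ 2) ≤ Real.exp 1 := by
    calc ((N.choose m : ℝ))⁻¹ * ∑ S ∈ T.powersetCard m,
        Real.exp ((‖∑ n ∈ S, c n‖) ^ 2 / (m : ℝ) ^ 2)
        ≤ ((N.choose m : ℝ))⁻¹ * ∑ S ∈ T.powersetCard m, Real.exp 1 := by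
          apply mul_le_mul_of_nonneg_left _ (by positivity)
          exact Finset.sum_le_sum fun S hS => Real.exp_le_exp.mpr (hz_le S hS)
      _ = Real.exp 1 := by
          rw [Finset.sum_const, hcard, nsmul_eq_mul]
          field_simp
  refine ⟨?_, hupper⟩
  have hJ : Real.exp (((N.choose m:ℝ))⁻¹ * ∑ S ∈ T.powersetCard m,
        (‖∑ n ∈ S, c n‖)^2 / (m:ℝ)^2)
      ≤ ((N.choose m:ℝ))⁻¹ * ∑ S ∈ T.powersetCard m,
        Real.exp ((‖∑ n ∈ S, c n‖)^2 / (m:ℝ)^2) := by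
    have h := convexOn_exp.map_sum_le (t := T.powersetCard m)
      (w := fun _ => ((N.choose m:ℝ))⁻¹)
      (p := fun S => (‖∑ n ∈ S, c n‖)^2 / (m:ℝ)^2)
      (fun _ _ => by positivity)
      (by rw [Finset.sum_const, hcard, nsmul_eq_mul]; field_simp)
      (fun _ _ => Set.mem_univ _)
    simpa [smul_eq_mul, Finset.mul_sum] using h
  refine le_trans ?_ hJ
  rw [Real.exp_le_exp]
  -- remains: (N - m)/(m(N-1)) ≤ C⁻¹ * ∑ z
  have hm0' : (1:ℝ) ≤ m := by exact_mod_cast hm1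
  have hN1 : (1:ℝ) ≤ (N:ℝ) - 1 := by
    have : (2:ℝ) ≤ N := by exact_mod_cast hN
    linarith
  have honecase : (∀ S ∈ T.powersetCard m,
      (‖∑ n ∈ S, c n‖)^2 / (m:ℝ)^2 = 1) →
      ((N:ℝ) - m) / (m * ((N:ℝ) - 1)) ≤ ((N.choose m:ℝ))⁻¹ *
        ∑ S ∈ T.powersetCard m, (‖∑ n ∈ S, c n‖)^2 / (m:ℝ)^2 := by
    intro hz
    rw [Finset.sum_congr rfl hz, Finset.sum_const, hcard, nsmul_eq_mul, mul_one,
      inv_mul_cancel₀ hCpos.ne']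
    rw [div_le_one (by nlinarith)]
    nlinarith
  rcases Nat.eq_zero_or_pos l with hl0 | hl1
  · -- l = 0 : every term is 1
    apply honecase
    intro S hS
    rw [mem_powersetCard] at hS
    have hcn : ∀ n ∈ S, c n = 1 := by
      intro n _
      simp [hc, hl0]
    rw [Finset.sum_congr rfl hcn, Finset.sum_const, hS.2, nsmul_eq_mul, mul_one]
    rw [Complex.norm_natCast]
    field_simp
  rcases eq_or_lt_of_le hm1 with hm1' | hm2
  · -- m = 1
    apply honecase
    intro S hS
    rw [mem_powersetCard] at hS
    obtain ⟨a, rfl⟩ := Finset.card_eq_one.mp (hS.2.trans hm1'.symm)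
    rw [Finset.sum_singleton, habs1]
    rw [← hm1']
    norm_num
  -- main case : 1 ≤ l, 2 ≤ m
  have hsum0 : ∑ n ∈ T, c n = 0 := geom_vanish N l hN hl1 hl
  have hdiag : ∀ n : ℕ, c n * conj (c n) = 1 := by
    intro n
    rw [Complex.mul_conj, Complex.normSq_eq_norm_sq, habs1]
    norm_num
  have hkey := sum_mul_conj T c m hm2
  rw [hTcard, hsum0, Finset.sum_congr rfl (fun n _ => hdiag n), Finset.sum_const, hTcard,
    nsmul_eq_mul, mul_one] at hkey
  have hkey' : ∑ S ∈ T.powersetCard m, (‖∑ n ∈ S, c n‖)^2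
      = (N:ℝ) * ((N-1).choose (m-1)) - (N:ℝ) * ((N-2).choose (m-2)) := by
    have hcast : ((∑ S ∈ T.powersetCard m, (‖∑ n ∈ S, c n‖)^2 : ℝ) : ℂ)
        = ∑ S ∈ T.powersetCard m, (∑ n ∈ S, c n) * conj (∑ n ∈ S, c n) := by
      push_cast
      refine Finset.sum_congr rfl fun S _ => ?_
      rw [Complex.mul_conj, Complex.normSq_eq_norm_sq]
      push_cast
      ring
    rw [hkey] at hcast
    have h2 : (((N:ℝ) * ((N-1).choose (m-1)) - (N:ℝ) * ((N-2).choose (m-2)) : ℝ) : ℂ)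
        = (((N-1).choose (m-1) : ℕ) : ℂ) * (N:ℂ)
          + (((N-2).choose (m-2) : ℕ) : ℂ) * ((0:ℂ) * conj (0:ℂ) - (N:ℂ)) := by
      push_cast
      simp
      ring
    exact Complex.ofReal_injective (hcast.trans h2.symm)
  rw [← Finset.sum_div, hkey']
  apply le_of_eq
  have idA : (N:ℝ) * ((N-1).choose (m-1)) = (m:ℝ) * (N.choose m) := by
    have h := Nat.add_one_mul_choose_eq (N-1) (m-1)
    have e1 : N-1+1 = N := by omega
    have e2 : m-1+1 = m := by omega
    rw [e1, e2] at h
    exact_mod_cast h.trans (Nat.mul_comm _ _)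
  have idB : ((N:ℝ) - 1) * ((N-2).choose (m-2)) = ((m:ℝ) - 1) * ((N-1).choose (m-1)) := by
    have h := Nat.add_one_mul_choose_eq (N-2) (m-2)
    have e1 : N-2+1 = N-1 := by omega
    have e2 : m-2+1 = m-1 := by omega
    rw [e1, e2] at h
    have cN : ((N-1:ℕ):ℝ) = (N:ℝ) - 1 := by
      rw [Nat.cast_sub (by omega)]; norm_num
    have cm : ((m-1:ℕ):ℝ) = (m:ℝ) - 1 := by
      rw [Nat.cast_sub (by omega)]; norm_num
    have hr : ((N-1:ℕ):ℝ) * ((N-2).choose (m-2)) = ((N-1).choose (m-1) : ℝ) * ((m-1:ℕ):ℝ) := by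
      exact_mod_cast h
    rw [cN, cm] at hr
    linarith
  have hd1 : (m:ℝ) * ((N:ℝ) - 1) ≠ 0 := by positivity
  field_simp
  linear_combination ((m:ℝ) - (N:ℝ)) * idA + (N:ℝ)*idB
end

section
/- Let N ≥ 2, l and m be nonnegative integers with 0 ≤ l ≤ N−1 and 1 ≤ m ≤ N. Then e^{(N−m)/(2m(N−1))} ≤ E[exp((U_l(m,N))²/m²)] ≤ e, where the expectation equals C(N,m)^{−1} · Σ_{S ⊆ {1,…,N}, |S|=m} exp((Σ_{n∈S} cos(2πnl/N))²/m²). -/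
open Real Finset

lemma count_subset {F t : Finset ℕ} {m : ℕ} (ht : t ⊆ F) (htm : t.card ≤ m) :
    ((F.powersetCard m).filter (fun S => t ⊆ S)).card = (F.card - t.card).choose (m - t.card) := by
  rw [← Finset.card_sdiff_of_subset ht, ← Finset.card_powersetCard (m - t.card) (F \ t)]
  apply Finset.card_bij' (fun S _ => S \ t) (fun S _ => S ∪ t)
  · intro S hS
    simp only [Finset.mem_filter, Finset.mem_powersetCard] at hS
    obtain ⟨⟨hSF, hScard⟩, htS⟩ := hS
    rw [Finset.mem_powersetCard]
    exact ⟨Finset.sdiff_subset_sdiff hSF le_rfl, by rw [Finset.card_sdiff_of_subset htS, hScard]⟩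
  · intro S hS
    rw [Finset.mem_powersetCard] at hS
    obtain ⟨hSF, hScard⟩ := hS
    have hdisj : Disjoint S t := Finset.disjoint_of_subset_left hSF (Finset.sdiff_disjoint)
    simp only [Finset.mem_filter, Finset.mem_powersetCard]
    refine ⟨⟨Finset.union_subset (hSF.trans (Finset.sdiff_subset)) ht, ?_⟩, Finset.subset_union_right⟩
    rw [Finset.card_union_of_disjoint hdisj, hScard]
    omega
  · intro S hS
    simp only [Finset.mem_filter] at hS
    exact Finset.sdiff_union_of_subset hS.2
  · intro S hS
    rw [Finset.mem_powersetCard] at hS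
    have hdisj : Disjoint S t := Finset.disjoint_of_subset_left hS.1 (Finset.sdiff_disjoint)
    exact Finset.union_sdiff_cancel_right hdisj

lemma sum_cos_nonneg (N k : ℕ) (hN : 0 < N) :
    0 ≤ ∑ n ∈ Finset.Icc 1 N, Real.cos (2 * Real.pi * n * k / N) := by
  by_cases hdvd : N ∣ k
  · obtain ⟨t, rfl⟩ := hdvd
    have h1 : ∀ n ∈ Finset.Icc 1 N, Real.cos (2 * Real.pi * n * (N * t : ℕ) / N) = 1 := by
      intro n _
      have : (2 * Real.pi * n * ((N * t : ℕ) : ℝ) / N : ℝ) = (n * t : ℕ) * (2 * Real.pi) := by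
        push_cast
        field_simp
      rw [this, Real.cos_nat_mul_two_pi]
    rw [Finset.sum_congr rfl h1]
    simp
  · set ζ : ℂ := Complex.exp (2 * Real.pi * k / N * Complex.I) with hζdef
    have hN' : (N : ℂ) ≠ 0 := Nat.cast_ne_zero.mpr hN.ne'
    have hζN : ζ ^ N = 1 := by
      rw [← Complex.exp_nat_mul]
      have : (N : ℂ) * (2 * Real.pi * k / N * Complex.I) = (k : ℤ) * (2 * Real.pi * Complex.I) := by
        push_cast
        field_simp
      rw [this]
      exact Complex.exp_int_mul_two_pi_mul_I k
    have hζ1 : ζ ≠ 1 := by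
      intro h
      rw [hζdef, Complex.exp_eq_one_iff] at h
      obtain ⟨n, hn⟩ := h
      apply hdvd
      have hπI : (2 : ℂ) * Real.pi * Complex.I ≠ 0 := by
        simp [Real.pi_ne_zero, Complex.I_ne_zero]
      have hc : (k : ℂ) = n * N := by
        field_simp at hn
        have h2 : (k : ℂ) * (2 * Real.pi * Complex.I) = (n * N) * (2 * Real.pi * Complex.I) := by
          linear_combination (2 * Real.pi * Complex.I) * hn
        exact mul_right_cancel₀ hπI h2
      have hz : (k : ℤ) = n * N := by exact_mod_cast hc
      exact Int.natCast_dvd_natCast.mp (Dvd.intro n (by linarith [hz]))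
    have hsum : ∑ n ∈ Finset.Icc 1 N, ζ ^ n = 0 := by
      have h2 : ∑ n ∈ Finset.Icc 1 N, ζ ^ n = ∑ n ∈ Finset.range N, ζ ^ (1 + n) := by
        rw [← Finset.Ico_add_one_right_eq_Icc, Finset.sum_Ico_eq_sum_range]
        simp
      rw [h2]
      have h3 : ∑ n ∈ Finset.range N, ζ ^ (1 + n) = ζ * ∑ n ∈ Finset.range N, ζ ^ n := by
        rw [Finset.mul_sum]; exact Finset.sum_congr rfl fun n _ => by rw [pow_add, pow_one]
      rw [h3, geom_sum_eq hζ1, hζN]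
      simp
    have hre : ∀ n : ℕ, (ζ ^ n).re = Real.cos (2 * Real.pi * n * k / N) := by
      intro n
      rw [hζdef, ← Complex.exp_nat_mul]
      have : (n : ℂ) * (2 * Real.pi * k / N * Complex.I) = ((2 * Real.pi * n * k / N : ℝ) : ℂ) * Complex.I := by
        push_cast; ring
      rw [this, Complex.exp_ofReal_mul_I_re]
    calc (0:ℝ) = (∑ n ∈ Finset.Icc 1 N, ζ ^ n).re := by rw [hsum]; simp
    _ = ∑ n ∈ Finset.Icc 1 N, Real.cos (2 * Real.pi * n * k / N) := by
        rw [Complex.re_sum]; exact Finset.sum_congr rfl fun n _ => hre n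
    _ ≤ _ := le_rfl

lemma sum_sq_powersetCard (F : Finset ℕ) (c : ℕ → ℝ) (m : ℕ) :
    ∑ S ∈ F.powersetCard m, (∑ n ∈ S, c n)^2
      = ∑ n ∈ F, ∑ n' ∈ F,
          (((F.powersetCard m).filter (fun S => n ∈ S ∧ n' ∈ S)).card : ℝ) * (c n * c n') := by
  have key : ∀ S ∈ F.powersetCard m, (∑ n ∈ S, c n)^2
      = ∑ n ∈ F, ∑ n' ∈ F, (if n ∈ S ∧ n' ∈ S then c n * c n' else 0) := by
    intro S hS
    rw [Finset.mem_powersetCard] at hS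
    have h1 : ∑ n ∈ S, c n = ∑ n ∈ F, (if n ∈ S then c n else 0) := by
      rw [Finset.sum_ite_mem, Finset.inter_comm, Finset.inter_eq_left.mpr hS.1]
    rw [h1, sq, Finset.sum_mul_sum]
    refine Finset.sum_congr rfl fun n _ => Finset.sum_congr rfl fun n' _ => ?_
    by_cases h : n ∈ S <;> by_cases h' : n' ∈ S <;> simp [h, h']
  rw [Finset.sum_congr rfl key, Finset.sum_comm]
  refine Finset.sum_congr rfl fun n _ => ?_
  rw [Finset.sum_comm]
  refine Finset.sum_congr rfl fun n' _ => ?_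
  rw [← Finset.sum_filter, Finset.sum_const, nsmul_eq_mul]

lemma nat_id (N m : ℕ) (hN : 2 ≤ N) (hm1 : 1 ≤ m) (hmN : m ≤ N) :
    ((N-1).choose (m-1) - (if m = 1 then 0 else (N-2).choose (m-2))) * N * (N-1)
      = N.choose m * m * (N - m)
    ∧ (if m = 1 then 0 else (N-2).choose (m-2)) ≤ (N-1).choose (m-1) := by
  obtain ⟨a, rfl⟩ : ∃ a, N = a + 2 := ⟨N - 2, by omega⟩
  by_cases h1 : m = 1
  · subst h1
    simp [Nat.choose_one_right]
  · obtain ⟨b, rfl⟩ : ∃ b, m = b + 2 := ⟨m - 2, by omega⟩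
    have hba : b + 2 ≤ a + 2 := hmN
    simp only [if_neg h1]
    have hsub : (a + 2 - 1) = a + 1 := by omega
    have hsub2 : (b + 2 - 1) = b + 1 := by omega
    have hsub3 : (a + 2 - 2) = a := by omega
    have hsub4 : (b + 2 - 2) = b := by omega
    rw [hsub, hsub2, hsub3, hsub4]
    constructor
    · have hpascal : (a+1).choose (b+1) = a.choose b + a.choose (b+1) := Nat.choose_succ_succ a b
      have hdiff : (a+1).choose (b+1) - a.choose b = a.choose (b+1) := by omega
      rw [hdiff]
      have e1 : (a+2).choose (b+2) * (b+2) = (a+2) * (a+1).choose (b+1) :=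
        (Nat.add_one_mul_choose_eq (a+1) (b+1)).symm
      have e2 : (a+1).choose (b+2) * (b+2) = (a+1).choose (b+1) * (a+1 - (b+1)) :=
        Nat.choose_succ_right_eq (a+1) (b+1)
      have e3 : (a+1) * a.choose (b+1) = (a+1).choose (b+2) * (b+2) :=
        Nat.add_one_mul_choose_eq a (b+1)
      have hab : a + 1 - (b + 1) = a - b := by omega
      have hNm : a + 2 - (b + 2) = a - b := by omega
      rw [hNm]
      calc a.choose (b+1) * (a+2) * (a+1)
          = (a+2) * ((a+1) * a.choose (b+1)) := by ring
        _ = (a+2) * ((a+1).choose (b+2) * (b+2)) := by rw [e3]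
        _ = (a+2) * ((a+1).choose (b+1) * (a - b)) := by rw [e2, hab]
        _ = ((a+2) * (a+1).choose (b+1)) * (a-b) := by ring
        _ = ((a+2).choose (b+2) * (b+2)) * (a-b) := by rw [e1]
        _ = (a+2).choose (b+2) * (b+2) * (a-b) := by ring
    · calc a.choose b ≤ a.choose b + a.choose (b+1) := Nat.le_add_right _ _
        _ = (a+1).choose (b+1) := (Nat.choose_succ_succ a b).symm

/-- Theorem 2.1 (ii): for `U_l(m,N) = Σ_{n∈S} cos(2πnl/N)` (the real part of `X_l(m,N)`),
`e^{(N-m)/(2m(N-1))} ≤ E[exp(U_l(m,N)²/m²)] ≤ e`. -/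
theorem subGaussian_U_bounds (N l m : ℕ) (hN : 2 ≤ N) (hl : l ≤ N - 1)
    (hm1 : 1 ≤ m) (hmN : m ≤ N) :
    Real.exp (((N : ℝ) - m) / (2 * m * ((N : ℝ) - 1))) ≤
      ((N.choose m : ℝ))⁻¹ * ∑ S ∈ (Finset.Icc 1 N).powersetCard m,
        Real.exp ((∑ n ∈ S, Real.cos (2 * Real.pi * n * l / N)) ^ 2 / (m : ℝ) ^ 2) ∧
    ((N.choose m : ℝ))⁻¹ * ∑ S ∈ (Finset.Icc 1 N).powersetCard m,
        Real.exp ((∑ n ∈ S, Real.cos (2 * Real.pi * n * l / N)) ^ 2 / (m : ℝ) ^ 2) ≤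
      Real.exp 1 := by
  set F : Finset ℕ := Finset.Icc 1 N with hF
  set c : ℕ → ℝ := fun n => Real.cos (2 * Real.pi * n * l / N) with hc
  have hFcard : F.card = N := by simp [hF]
  have hP : (F.powersetCard m).card = N.choose m := by
    rw [Finset.card_powersetCard, hFcard]
  have hCpos : (0:ℝ) < (N.choose m : ℝ) := by
    exact_mod_cast Nat.choose_pos hmN
  have hmpos : (0:ℝ) < (m:ℝ) := by exact_mod_cast hm1
  have hN1 : (0:ℝ) < (N:ℝ) - 1 := by
    have : (2:ℝ) ≤ N := by exact_mod_cast hN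
    linarith
  set K1 : ℕ := (N-1).choose (m-1) with hK1def
  set k2 : ℕ := if m = 1 then 0 else (N-2).choose (m-2) with hk2def
  have hid := nat_id N m hN hm1 hmN
  -- counting lemmas
  have hK1 : ∀ n ∈ F, (((F.powersetCard m).filter (fun S => n ∈ S ∧ n ∈ S)).card : ℝ) = (K1:ℝ) := by
    intro n hn
    have he : (F.powersetCard m).filter (fun S => n ∈ S ∧ n ∈ S)
        = (F.powersetCard m).filter (fun S => {n} ⊆ S) := by
      apply Finset.filter_congr; intro S _; simp
    rw [he, count_subset (Finset.singleton_subset_iff.mpr hn)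
      (by simpa using hm1), Finset.card_singleton, hFcard]
  have hK2 : ∀ n ∈ F, ∀ n' ∈ F, n ≠ n' →
      (((F.powersetCard m).filter (fun S => n ∈ S ∧ n' ∈ S)).card : ℝ) = (k2:ℝ) := by
    intro n hn n' hn' hne
    by_cases h1 : m = 1
    · subst h1
      suffices hemp : (F.powersetCard 1).filter (fun S => n ∈ S ∧ n' ∈ S) = ∅ by
        simp [hk2def, hemp]
      rw [Finset.filter_eq_empty_iff]
      intro S hS
      rw [Finset.mem_powersetCard] at hS
      rintro ⟨hnS, hn'S⟩
      have : ({n, n'} : Finset ℕ) ⊆ S := by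
        intro x hx; simp at hx; rcases hx with rfl | rfl <;> assumption
      have h2 : ({n, n'} : Finset ℕ).card = 2 := Finset.card_pair hne
      have := Finset.card_le_card this
      omega
    · have he : (F.powersetCard m).filter (fun S => n ∈ S ∧ n' ∈ S)
          = (F.powersetCard m).filter (fun S => ({n, n'} : Finset ℕ) ⊆ S) := by
        apply Finset.filter_congr; intro S _
        simp [Finset.insert_subset_iff]
      have hsub : ({n, n'} : Finset ℕ) ⊆ F := by
        intro x hx; simp at hx; rcases hx with rfl | rfl <;> assumption
      have h2 : ({n, n'} : Finset ℕ).card = 2 := Finset.card_pair hne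
      rw [he, count_subset hsub (by omega), h2, hFcard, hk2def, if_neg h1]
  -- the main sum decomposition
  have hstep : ∑ S ∈ F.powersetCard m, (∑ n ∈ S, c n)^2
      = (K1:ℝ) * (∑ n ∈ F, (c n)^2)
        + (k2:ℝ) * (∑ n ∈ F, ∑ n' ∈ F.erase n, c n * c n') := by
    rw [sum_sq_powersetCard, Finset.mul_sum, Finset.mul_sum, ← Finset.sum_add_distrib]
    refine Finset.sum_congr rfl fun n hn => ?_
    rw [← Finset.add_sum_erase F _ hn, hK1 n hn, Finset.mul_sum]
    congr 1
    · ring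
    · refine Finset.sum_congr rfl fun n' hn' => ?_
      rw [hK2 n hn n' (Finset.mem_of_mem_erase hn') (Finset.ne_of_mem_erase hn').symm]
  have hD : ∑ n ∈ F, ∑ n' ∈ F.erase n, c n * c n'
      = (∑ n ∈ F, c n)^2 - ∑ n ∈ F, (c n)^2 := by
    have h1 : ∀ n ∈ F, ∑ n' ∈ F.erase n, c n * c n'
        = (∑ n' ∈ F, c n * c n') - (c n)^2 := by
      intro n hn
      rw [← Finset.add_sum_erase F _ hn]; ring
    rw [Finset.sum_congr rfl h1, Finset.sum_sub_distrib, sq (∑ n ∈ F, c n), Finset.sum_mul_sum]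
  -- A ≥ N/2
  have hA : (N:ℝ)/2 ≤ ∑ n ∈ F, (c n)^2 := by
    have h1 : ∀ n ∈ F, (c n)^2 = 1/2 + Real.cos (2 * Real.pi * n * (2*l : ℕ) / N)/2 := by
      intro n _
      rw [hc]
      rw [Real.cos_sq]
      congr 2
      push_cast
      ring
    rw [Finset.sum_congr rfl h1, Finset.sum_add_distrib, Finset.sum_const, hFcard]
    have := sum_cos_nonneg N (2*l) (by omega)
    have h2 : 0 ≤ ∑ n ∈ F, Real.cos (2 * Real.pi * n * (2*l : ℕ) / N)/2 := by
      rw [← Finset.sum_div]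
      positivity
    rw [nsmul_eq_mul]
    linarith
  have hT2 : (0:ℝ) ≤ (∑ n ∈ F, c n)^2 := sq_nonneg _
  have hk2K1 : (k2:ℝ) ≤ (K1:ℝ) := by exact_mod_cast hid.2
  have hk2nn : (0:ℝ) ≤ (k2:ℝ) := Nat.cast_nonneg _
  have hlow : ((K1:ℝ) - k2) * ((N:ℝ)/2) ≤ ∑ S ∈ F.powersetCard m, (∑ n ∈ S, c n)^2 := by
    rw [hstep, hD]
    nlinarith [hA, hT2, hk2K1, hk2nn]
  -- the cast identity
  have hKid : ((K1:ℝ) - k2) * (N:ℝ) * ((N:ℝ)-1) = (N.choose m : ℝ) * m * ((N:ℝ) - m) := by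
    have h := hid.1
    have c1 : ((N:ℝ) - 1) = ((N - 1 : ℕ) : ℝ) := by
      rw [Nat.cast_sub (by omega)]; norm_num
    have c2 : ((N:ℝ) - m) = ((N - m : ℕ) : ℝ) := by
      rw [Nat.cast_sub hmN]
    have c3 : ((K1:ℝ) - k2) = ((K1 - k2 : ℕ) : ℝ) := by
      rw [Nat.cast_sub hid.2]
    rw [c1, c2, c3]
    exact_mod_cast h
  constructor
  · -- lower bound via Jensen
    have hw : ∑ _S ∈ F.powersetCard m, ((N.choose m : ℝ))⁻¹ = 1 := by
      rw [Finset.sum_const, hP, nsmul_eq_mul]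
      field_simp
    have jensen := convexOn_exp.map_sum_le (t := F.powersetCard m)
      (w := fun _ => ((N.choose m : ℝ))⁻¹)
      (p := fun S => (∑ n ∈ S, c n)^2 / (m:ℝ)^2)
      (fun _ _ => by positivity) hw (fun _ _ => Set.mem_univ _)
    simp only [smul_eq_mul] at jensen
    have harg : ∑ S ∈ F.powersetCard m, ((N.choose m : ℝ))⁻¹ * ((∑ n ∈ S, c n)^2 / (m:ℝ)^2)
        = (∑ S ∈ F.powersetCard m, (∑ n ∈ S, c n)^2) / ((N.choose m : ℝ) * (m:ℝ)^2) := by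
      rw [← Finset.mul_sum, ← Finset.sum_div]
      field_simp
    have hrhs : ∑ S ∈ F.powersetCard m, ((N.choose m : ℝ))⁻¹ * Real.exp ((∑ n ∈ S, c n)^2 / (m:ℝ)^2)
        = ((N.choose m : ℝ))⁻¹ * ∑ S ∈ F.powersetCard m, Real.exp ((∑ n ∈ S, c n)^2 / (m:ℝ)^2) := by
      rw [Finset.mul_sum]
    rw [harg, hrhs] at jensen
    refine le_trans ?_ jensen
    rw [Real.exp_le_exp]
    rw [div_le_div_iff₀ (by positivity) (by positivity)]
    calc ((N:ℝ) - m) * ((N.choose m : ℝ) * (m:ℝ)^2)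
        = ((N.choose m : ℝ) * m * ((N:ℝ) - m)) * m := by ring
      _ = (((K1:ℝ) - k2) * (N:ℝ) * ((N:ℝ)-1)) * m := by rw [hKid]
      _ = (((K1:ℝ) - k2) * ((N:ℝ)/2)) * (2 * m * ((N:ℝ)-1)) := by ring
      _ ≤ (∑ S ∈ F.powersetCard m, (∑ n ∈ S, c n)^2) * (2 * m * ((N:ℝ)-1)) := by
          apply mul_le_mul_of_nonneg_right hlow
          positivity
  · -- upper bound
    have hub : ∀ S ∈ F.powersetCard m,
        Real.exp ((∑ n ∈ S, c n)^2 / (m:ℝ)^2) ≤ Real.exp 1 := by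
      intro S hS
      rw [Finset.mem_powersetCard] at hS
      rw [Real.exp_le_exp, div_le_one (by positivity)]
      have h1 : |∑ n ∈ S, c n| ≤ (m:ℝ) := by
        calc |∑ n ∈ S, c n| ≤ ∑ n ∈ S, |c n| := Finset.abs_sum_le_sum_abs _ _
          _ ≤ ∑ _n ∈ S, (1:ℝ) := Finset.sum_le_sum fun n _ => Real.abs_cos_le_one _
          _ = (m:ℝ) := by rw [Finset.sum_const, hS.2, nsmul_eq_mul, mul_one]
      calc (∑ n ∈ S, c n)^2 = |∑ n ∈ S, c n|^2 := (sq_abs _).symm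
        _ ≤ (m:ℝ)^2 := by
            apply pow_le_pow_left₀ (abs_nonneg _) h1
    calc ((N.choose m : ℝ))⁻¹ * ∑ S ∈ F.powersetCard m, Real.exp ((∑ n ∈ S, c n)^2 / (m:ℝ)^2)
        ≤ ((N.choose m : ℝ))⁻¹ * ((F.powersetCard m).card • Real.exp 1) := by
          apply mul_le_mul_of_nonneg_left (Finset.sum_le_card_nsmul _ _ _ hub)
          positivity
      _ = Real.exp 1 := by
          rw [hP, nsmul_eq_mul]
          field_simp
end

section
/- Let N ≥ 2, l and m be integers with 1 ≤ l ≤ N−1, N ≠ 2l and 1 ≤ m ≤ N. Then e^{(N−m)/(2m(N−1))} ≤ E[exp((V_l(m,N))²/m²)] ≤ e, where the expectation equals C(N,m)^{−1} · Σ_{S ⊆ {1,…,N}, |S|=m} exp((Σ_{n∈S} sin(2πnl/N))²/m²). -/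
open Real Finset


lemma count_superset (A B : Finset ℕ) (m : ℕ) (hBA : B ⊆ A) (hBm : B.card ≤ m) :
    ((A.powersetCard m).filter (fun S => B ⊆ S)).card = (A.card - B.card).choose (m - B.card) := by
  have : ((A.powersetCard m).filter (fun S => B ⊆ S)).card
      = ((A \ B).powersetCard (m - B.card)).card := by
    apply Finset.card_nbij' (fun S => S \ B) (fun T => T ∪ B)
    · intro S hS
      simp only [mem_coe, mem_filter, mem_powersetCard] at hS ⊢
      refine ⟨Finset.sdiff_subset_sdiff hS.1.1 le_rfl, ?_⟩
      rw [Finset.card_sdiff_of_subset hS.2, hS.1.2]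
    · intro T hT
      simp only [mem_coe, mem_filter, mem_powersetCard] at hT ⊢
      have hdisj : Disjoint T B := Finset.disjoint_of_subset_left hT.1 Finset.sdiff_disjoint
      refine ⟨⟨Finset.union_subset (hT.1.trans Finset.sdiff_subset) hBA, ?_⟩, Finset.subset_union_right⟩
      rw [Finset.card_union_of_disjoint hdisj, hT.2]
      omega
    · intro S hS
      simp only [mem_coe, mem_filter, mem_powersetCard] at hS
      exact Finset.sdiff_union_of_subset hS.2
    · intro T hT
      simp only [mem_coe, mem_powersetCard] at hT
      have hdisj : Disjoint T B := Finset.disjoint_of_subset_left hT.1 Finset.sdiff_disjoint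
      exact Finset.union_sdiff_cancel_right hdisj
  rw [this, Finset.card_powersetCard, Finset.card_sdiff_of_subset hBA]


lemma sum_exp_zero (N j : ℕ) (hN : 1 ≤ N) (h : ∀ k : ℤ, (j : ℝ) ≠ k * N) :
    ∑ n ∈ Finset.range N, Complex.exp ((2 * Real.pi * n * j / N : ℝ) * Complex.I) = 0 := by
  have hN0 : (N : ℝ) ≠ 0 := by positivity
  have hNC : (N : ℂ) ≠ 0 := by exact_mod_cast Nat.cast_ne_zero.mpr (by omega)
  set z : ℂ := Complex.exp ((2 * Real.pi * j / N : ℝ) * Complex.I) with hz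
  have hpow : ∀ n : ℕ, Complex.exp ((2 * Real.pi * n * j / N : ℝ) * Complex.I) = z ^ n := by
    intro n
    rw [hz, ← Complex.exp_nat_mul]
    congr 1
    push_cast
    ring
  have hzN : z ^ N = 1 := by
    rw [hz, ← Complex.exp_nat_mul]
    have : ((N : ℂ)) * (((2 * Real.pi * j / N : ℝ)) * Complex.I) = (j : ℤ) * (2 * Real.pi * Complex.I) := by
      push_cast
      field_simp
    rw [this, Complex.exp_int_mul_two_pi_mul_I]
  have hz1 : z ≠ 1 := by
    rw [hz, Ne, Complex.exp_eq_one_iff]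
    rintro ⟨k, hk⟩
    have hk' : ((2 * Real.pi * j / N : ℝ) : ℂ) = ((k * (2 * Real.pi) : ℝ) : ℂ) := by
      apply mul_right_cancel₀ Complex.I_ne_zero
      rw [hk]; push_cast; ring
    have hk2 : (2 * Real.pi * j / N : ℝ) = k * (2 * Real.pi) := by exact_mod_cast hk'
    have hpi : (2 * Real.pi) ≠ 0 := by positivity
    apply h k
    have h2 : (2 * Real.pi) * (j : ℝ) = (2 * Real.pi) * ((k : ℝ) * N) := by
      field_simp at hk2
      linear_combination (2 * Real.pi) * hk2
    exact mul_left_cancel₀ hpi h2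
  calc ∑ n ∈ Finset.range N, Complex.exp ((2 * Real.pi * n * j / N : ℝ) * Complex.I)
      = ∑ n ∈ Finset.range N, z ^ n := by exact Finset.sum_congr rfl fun n _ => hpow n
    _ = (z ^ N - 1) / (z - 1) := geom_sum_eq hz1 N
    _ = 0 := by rw [hzN, sub_self, zero_div]

lemma sum_sin_zero (N j : ℕ) (hN : 1 ≤ N) (h : ∀ k : ℤ, (j : ℝ) ≠ k * N) :
    ∑ n ∈ Finset.range N, Real.sin (2 * Real.pi * n * j / N) = 0 := by
  have := congrArg Complex.im (sum_exp_zero N j hN h)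
  rw [Complex.im_sum] at this
  simp only [Complex.exp_ofReal_mul_I_im, Complex.zero_im] at this
  exact this

lemma sum_cos_zero (N j : ℕ) (hN : 1 ≤ N) (h : ∀ k : ℤ, (j : ℝ) ≠ k * N) :
    ∑ n ∈ Finset.range N, Real.cos (2 * Real.pi * n * j / N) = 0 := by
  have := congrArg Complex.re (sum_exp_zero N j hN h)
  rw [Complex.re_sum] at this
  simp only [Complex.exp_ofReal_mul_I_re, Complex.zero_re] at this
  exact this

lemma sum_Icc_shift (N : ℕ) (hN : 1 ≤ N) (f : ℕ → ℝ) (h : f N = f 0) :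
    ∑ n ∈ Finset.Icc 1 N, f n = ∑ n ∈ Finset.range N, f n := by
  have h1 : Finset.Icc 1 N = Finset.Ico 1 (N + 1) := by
    rw [Finset.Ico_add_one_right_eq_Icc]
  have h2 : Finset.range N = Finset.Ico 0 N := by rw [Finset.range_eq_Ico]
  rw [h1, h2, Finset.sum_Ico_succ_top (by omega), h,
    Finset.sum_eq_sum_Ico_succ_bot (by omega : 0 < N)]
  ring


lemma sum_sq_expand (A : Finset ℕ) (m : ℕ) (f : ℕ → ℝ) :
    ∑ S ∈ A.powersetCard m, (∑ n ∈ S, f n) ^ 2 =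
      ∑ n ∈ A, ∑ k ∈ A, f n * f k *
        (((A.powersetCard m).filter (fun S => n ∈ S ∧ k ∈ S)).card : ℝ) := by
  have step1 : ∀ S ∈ A.powersetCard m, (∑ n ∈ S, f n) ^ 2 =
      ∑ n ∈ A, ∑ k ∈ A, (if n ∈ S ∧ k ∈ S then f n * f k else 0) := by
    intro S hS
    have hSA : S ⊆ A := (Finset.mem_powersetCard.1 hS).1
    have h1 : ∑ n ∈ S, f n = ∑ n ∈ A, (if n ∈ S then f n else 0) := by
      rw [← Finset.sum_filter]
      congr 1
      ext x
      simp only [Finset.mem_filter]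
      exact ⟨fun hx => ⟨hSA hx, hx⟩, fun hx => hx.2⟩
    rw [h1, sq, Finset.sum_mul_sum]
    apply Finset.sum_congr rfl
    intro n _
    apply Finset.sum_congr rfl
    intro k _
    by_cases h1 : n ∈ S <;> by_cases h2 : k ∈ S <;> simp [h1, h2]
  rw [Finset.sum_congr rfl step1, Finset.sum_comm]
  apply Finset.sum_congr rfl
  intro n _
  rw [Finset.sum_comm]
  apply Finset.sum_congr rfl
  intro k _
  rw [Finset.sum_ite, Finset.sum_const, Finset.sum_const, nsmul_eq_mul, smul_zero, add_zero,
    mul_comm]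

lemma sum_sq_value (A : Finset ℕ) (m : ℕ) (f : ℕ → ℝ) (c1 c2 : ℕ)
    (hdiag : ∀ n ∈ A, (((A.powersetCard m).filter (fun S => n ∈ S ∧ n ∈ S)).card) = c1)
    (hoff : ∀ n ∈ A, ∀ k ∈ A, n ≠ k →
      (((A.powersetCard m).filter (fun S => n ∈ S ∧ k ∈ S)).card) = c2) :
    ∑ S ∈ A.powersetCard m, (∑ n ∈ S, f n) ^ 2 =
      (c2 : ℝ) * (∑ n ∈ A, f n) ^ 2 + ((c1 : ℝ) - c2) * ∑ n ∈ A, f n ^ 2 := by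
  rw [sum_sq_expand]
  have key : ∀ n ∈ A, ∀ k ∈ A,
      f n * f k * (((A.powersetCard m).filter (fun S => n ∈ S ∧ k ∈ S)).card : ℝ) =
        f n * f k * c2 + (if n = k then f n ^ 2 * ((c1 : ℝ) - c2) else 0) := by
    intro n hn k hk
    by_cases h : n = k
    · subst h
      rw [hdiag n hn]
      simp [sq]
      ring
    · rw [hoff n hn k hk h]
      simp [h]
  calc ∑ n ∈ A, ∑ k ∈ A, f n * f k *
        (((A.powersetCard m).filter (fun S => n ∈ S ∧ k ∈ S)).card : ℝ)
      = ∑ n ∈ A, ∑ k ∈ A, (f n * f k * c2 + (if n = k then f n ^ 2 * ((c1 : ℝ) - c2) else 0)) := by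
        exact Finset.sum_congr rfl fun n hn => Finset.sum_congr rfl fun k hk => key n hn k hk
    _ = (∑ n ∈ A, ∑ k ∈ A, f n * f k * c2)
        + ∑ n ∈ A, ∑ k ∈ A, (if n = k then f n ^ 2 * ((c1 : ℝ) - c2) else 0) := by
        rw [← Finset.sum_add_distrib]
        exact Finset.sum_congr rfl fun n _ => by rw [Finset.sum_add_distrib]
    _ = (c2 : ℝ) * (∑ n ∈ A, f n) ^ 2 + ((c1 : ℝ) - c2) * ∑ n ∈ A, f n ^ 2 := by
        congr 1
        · rw [sq, Finset.sum_mul_sum, Finset.mul_sum]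
          refine Finset.sum_congr rfl fun n _ => ?_
          rw [Finset.mul_sum]
          exact Finset.sum_congr rfl fun k _ => by ring
        · rw [Finset.mul_sum]
          exact Finset.sum_congr rfl fun n hn => by
            rw [Finset.sum_ite_eq A n (fun _ => f n ^ 2 * ((c1 : ℝ) - c2)), if_pos hn]
            ring

lemma choose_id1 (N m : ℕ) (hN : 1 ≤ N) (hm : 1 ≤ m) :
    N * (N - 1).choose (m - 1) = N.choose m * m := by
  obtain ⟨N', rfl⟩ : ∃ N', N = N' + 1 := ⟨N - 1, by omega⟩
  obtain ⟨m', rfl⟩ : ∃ m', m = m' + 1 := ⟨m - 1, by omega⟩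
  simpa using Nat.add_one_mul_choose_eq N' m'


/-- Theorem 2.1 (iii): for `V_l(m,N)` the imaginary part of `X_l(m,N)`
(so `V_l(m,N)² = (Σ_{n∈S} sin(2πnl/N))²`), with `1 ≤ l ≤ N-1` and `N ≠ 2l`,
`e^{(N-m)/(2m(N-1))} ≤ E[exp(V_l(m,N)²/m²)] ≤ e`. -/
theorem subGaussian_V_bounds (N l m : ℕ) (hN : 2 ≤ N) (hl1 : 1 ≤ l) (hl : l ≤ N - 1)
    (hNl : N ≠ 2 * l) (hm1 : 1 ≤ m) (hmN : m ≤ N) :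
    Real.exp (((N : ℝ) - m) / (2 * m * ((N : ℝ) - 1))) ≤
      ((N.choose m : ℝ))⁻¹ * ∑ S ∈ (Finset.Icc 1 N).powersetCard m,
        Real.exp ((∑ n ∈ S, Real.sin (2 * Real.pi * n * l / N)) ^ 2 / (m : ℝ) ^ 2) ∧
    ((N.choose m : ℝ))⁻¹ * ∑ S ∈ (Finset.Icc 1 N).powersetCard m,
        Real.exp ((∑ n ∈ S, Real.sin (2 * Real.pi * n * l / N)) ^ 2 / (m : ℝ) ^ 2) ≤
      Real.exp 1 := by
  set A := Finset.Icc 1 N with hAdef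
  set f : ℕ → ℝ := fun n => Real.sin (2 * Real.pi * n * l / N) with hfdef
  have hN0 : (0:ℝ) < N := by positivity
  have hm0 : (0:ℝ) < m := by exact_mod_cast hm1
  have hNR : (2:ℝ) ≤ N := by exact_mod_cast hN
  have hNm1 : (0:ℝ) < (N:ℝ) - 1 := by linarith
  have hA : A.card = N := by rw [hAdef, Nat.card_Icc]; omega
  have hC : 0 < N.choose m := Nat.choose_pos hmN
  have hC0 : (0:ℝ) < (N.choose m : ℝ) := by exact_mod_cast hC
  have hcard : (A.powersetCard m).card = N.choose m := by
    rw [Finset.card_powersetCard, hA]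
  -- trig boundary values
  have hfN0 : f N = 0 := by
    have harg : (2 * Real.pi * (N:ℝ) * l / N) = ((2*l : ℕ) : ℝ) * Real.pi := by
      push_cast
      field_simp
    rw [hfdef]
    simp only
    rw [harg, Real.sin_nat_mul_pi]
  have hf00 : f 0 = 0 := by simp [hfdef]
  have hl' : ∀ k : ℤ, (l : ℝ) ≠ k * N := by
    intro k hk
    have hk' : (l : ℤ) = k * N := by exact_mod_cast hk
    have h1 : (1:ℤ) ≤ l := by exact_mod_cast hl1
    have h2 : (l:ℤ) ≤ (N:ℤ) - 1 := by
      have : l ≤ N - 1 := hl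
      omega
    have hNZ : (2:ℤ) ≤ N := by exact_mod_cast hN
    rcases le_or_gt k 0 with h | h
    · nlinarith
    · have : (1:ℤ) ≤ k := h
      nlinarith
  have h2l' : ∀ k : ℤ, ((2*l : ℕ) : ℝ) ≠ k * N := by
    intro k hk
    have hk' : ((2*l : ℕ) : ℤ) = k * N := by exact_mod_cast hk
    have h1 : (1:ℤ) ≤ l := by exact_mod_cast hl1
    have h2 : (l:ℤ) ≤ (N:ℤ) - 1 := by
      have : l ≤ N - 1 := hl
      omega
    have hNZ : (2:ℤ) ≤ N := by exact_mod_cast hN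
    have hN2l : (N:ℤ) ≠ 2 * l := by exact_mod_cast hNl
    push_cast at hk'
    rcases le_or_gt k 0 with h | h
    · nlinarith
    · rcases eq_or_lt_of_le (show (1:ℤ) ≤ k from h) with h1k | h1k
      · rw [← h1k] at hk'; omega
      · have : (2:ℤ) ≤ k := h1k
        nlinarith
  -- sum of sin = 0
  have hsum : ∑ n ∈ A, f n = 0 := by
    rw [hAdef, sum_Icc_shift N (by omega) f (by rw [hfN0, hf00])]
    exact sum_sin_zero N l (by omega) hl'
  -- sum of sin^2 = N/2
  have hsumsq : ∑ n ∈ A, f n ^ 2 = (N:ℝ) / 2 := by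
    rw [hAdef, sum_Icc_shift N (by omega) (fun n => f n ^ 2)
      (by show f N ^ 2 = f 0 ^ 2; rw [hfN0, hf00])]
    have hpt : ∀ n : ℕ, f n ^ 2 = 1/2 - Real.cos (2 * Real.pi * n * ((2*l : ℕ)) / N) / 2 := by
      intro n
      have harg : (2:ℝ) * (2 * Real.pi * n * l / N) = 2 * Real.pi * n * ((2*l : ℕ) : ℝ) / N := by
        push_cast
        ring
      rw [hfdef]
      simp only
      rw [Real.sin_sq, Real.cos_sq, harg]
      ring
    rw [Finset.sum_congr rfl (fun n _ => hpt n)]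
    rw [Finset.sum_sub_distrib, Finset.sum_const, Finset.card_range]
    have hcos := sum_cos_zero N (2*l) (by omega) h2l'
    rw [← Finset.sum_div, hcos]
    push_cast
    ring
  -- counts
  have hc1 : ∀ n ∈ A, ((A.powersetCard m).filter (fun S => n ∈ S ∧ n ∈ S)).card
      = (N-1).choose (m-1) := by
    intro n hn
    have heq : (A.powersetCard m).filter (fun S => n ∈ S ∧ n ∈ S)
        = (A.powersetCard m).filter (fun S => ({n} : Finset ℕ) ⊆ S) := by
      apply Finset.filter_congr
      intro S _
      simp
    rw [heq, count_superset A {n} m (by simpa using hn)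
      (by rw [Finset.card_singleton]; omega), hA, Finset.card_singleton]
  set c2 : ℕ := if 2 ≤ m then (N-2).choose (m-2) else 0 with hc2def
  have hc2 : ∀ n ∈ A, ∀ k ∈ A, n ≠ k →
      ((A.powersetCard m).filter (fun S => n ∈ S ∧ k ∈ S)).card = c2 := by
    intro n hn k hk hnk
    by_cases h2 : 2 ≤ m
    · have heq : (A.powersetCard m).filter (fun S => n ∈ S ∧ k ∈ S)
          = (A.powersetCard m).filter (fun S => ({n, k} : Finset ℕ) ⊆ S) := by
        apply Finset.filter_congr
        intro S _
        simp [Finset.insert_subset_iff]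
      rw [heq, count_superset A {n, k} m
        (by simp [Finset.insert_subset_iff, hn, hk])
        (by rw [Finset.card_pair hnk]; omega), hA, Finset.card_pair hnk,
        hc2def, if_pos h2]
    · rw [hc2def, if_neg h2]
      rw [Finset.card_eq_zero, Finset.filter_eq_empty_iff]
      intro S hS hc
      have h1 : 1 < S.card := Finset.one_lt_card.2 ⟨n, hc.1, k, hc.2, hnk⟩
      have h2' := (Finset.mem_powersetCard.1 hS).2
      omega
  -- value of sum of squares
  have hT : ∑ S ∈ A.powersetCard m, (∑ n ∈ S, f n) ^ 2
      = (((N-1).choose (m-1) : ℝ) - (c2 : ℝ)) * ((N:ℝ)/2) := by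
    rw [sum_sq_value A m f _ c2 hc1 hc2, hsum, hsumsq]
    ring
  -- choose identities in ℝ
  have e1 : (N:ℝ) * ((N-1).choose (m-1) : ℝ) = (N.choose m : ℝ) * m := by
    exact_mod_cast choose_id1 N m (by omega) hm1
  have e2 : ((N:ℝ) - 1) * (c2 : ℝ) = ((N-1).choose (m-1) : ℝ) * ((m:ℝ) - 1) := by
    by_cases h2 : 2 ≤ m
    · rw [hc2def, if_pos h2]
      have h := choose_id1 (N-1) (m-1) (by omega) (by omega)
      rw [(by omega : N - 1 - 1 = N - 2), (by omega : m - 1 - 1 = m - 2)] at h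
      have h' : ((N - 1 : ℕ) : ℝ) * ((N-2).choose (m-2) : ℝ)
          = ((N-1).choose (m-1) : ℝ) * ((m - 1 : ℕ) : ℝ) := by exact_mod_cast h
      rw [Nat.cast_sub (by omega : 1 ≤ N), Nat.cast_sub (by omega : 1 ≤ m)] at h'
      push_cast at h' ⊢
      linarith
    · rw [hc2def, if_neg h2]
      have hm1' : m = 1 := by omega
      rw [hm1']
      push_cast
      ring
  -- expectation of t
  set a : ℝ := ((N : ℝ) - m) / (2 * m * ((N : ℝ) - 1)) with hadef
  have hEt : ∑ S ∈ A.powersetCard m, (∑ n ∈ S, f n) ^ 2 / (m:ℝ)^2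
      = (N.choose m : ℝ) * a := by
    rw [← Finset.sum_div, hT, hadef]
    have hm' : (m:ℝ) ≠ 0 := ne_of_gt hm0
    have hN1' : (N:ℝ) - 1 ≠ 0 := ne_of_gt hNm1
    field_simp
    linear_combination ((N:ℝ)-(m:ℝ)) * e1 - (N:ℝ) * e2
  constructor
  · -- lower bound
    have key : ∀ S ∈ A.powersetCard m,
        Real.exp a * ((∑ n ∈ S, f n) ^ 2 / (m:ℝ)^2 - a + 1)
          ≤ Real.exp ((∑ n ∈ S, f n) ^ 2 / (m:ℝ)^2) := by
      intro S _
      set x := (∑ n ∈ S, f n) ^ 2 / (m:ℝ)^2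
      calc Real.exp a * (x - a + 1) ≤ Real.exp a * Real.exp (x - a) := by
            apply mul_le_mul_of_nonneg_left _ (Real.exp_pos a).le
            have := Real.add_one_le_exp (x - a)
            linarith
        _ = Real.exp x := by rw [← Real.exp_add]; ring_nf
    have hsum_ge : (N.choose m : ℝ) * Real.exp a
        ≤ ∑ S ∈ A.powersetCard m, Real.exp ((∑ n ∈ S, f n) ^ 2 / (m:ℝ)^2) := by
      have hls : ∑ S ∈ A.powersetCard m,
          Real.exp a * ((∑ n ∈ S, f n) ^ 2 / (m:ℝ)^2 - a + 1)
            = (N.choose m : ℝ) * Real.exp a := by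
        rw [← Finset.mul_sum]
        have : ∑ S ∈ A.powersetCard m, ((∑ n ∈ S, f n) ^ 2 / (m:ℝ)^2 - a + 1)
            = (N.choose m : ℝ) := by
          rw [Finset.sum_add_distrib, Finset.sum_sub_distrib, hEt, Finset.sum_const,
            Finset.sum_const, hcard, nsmul_eq_mul, nsmul_eq_mul]
          push_cast
          ring
        rw [this]
        ring
      rw [← hls]
      exact Finset.sum_le_sum key
    rw [inv_mul_eq_div, le_div_iff₀ hC0]
    linarith [hsum_ge]
  · -- upper bound
    have hb : ∀ S ∈ A.powersetCard m,
        Real.exp ((∑ n ∈ S, f n) ^ 2 / (m:ℝ)^2) ≤ Real.exp 1 := by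
      intro S hS
      apply Real.exp_le_exp.2
      have hcardS : S.card = m := (Finset.mem_powersetCard.1 hS).2
      have habs : |∑ n ∈ S, f n| ≤ (m:ℝ) := by
        calc |∑ n ∈ S, f n| ≤ ∑ n ∈ S, |f n| := Finset.abs_sum_le_sum_abs _ _
          _ ≤ S.card • (1:ℝ) := Finset.sum_le_card_nsmul S _ 1 (fun n _ => by
              rw [hfdef]; exact abs_le.mpr ⟨Real.neg_one_le_sin _, Real.sin_le_one _⟩)
          _ = (m:ℝ) := by rw [hcardS, nsmul_eq_mul, mul_one]
      have hsq : (∑ n ∈ S, f n) ^ 2 ≤ (m:ℝ)^2 := by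
        rw [← sq_abs]
        exact pow_le_pow_left₀ (abs_nonneg _) habs 2
      rw [div_le_one (by positivity)]
      exact hsq
    have hsum_le : ∑ S ∈ A.powersetCard m, Real.exp ((∑ n ∈ S, f n) ^ 2 / (m:ℝ)^2)
        ≤ (N.choose m : ℝ) * Real.exp 1 := by
      calc ∑ S ∈ A.powersetCard m, Real.exp ((∑ n ∈ S, f n) ^ 2 / (m:ℝ)^2)
          ≤ (A.powersetCard m).card • Real.exp 1 := Finset.sum_le_card_nsmul _ _ _ hb
        _ = (N.choose m : ℝ) * Real.exp 1 := by rw [hcard, nsmul_eq_mul]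
    calc ((N.choose m : ℝ))⁻¹ * ∑ S ∈ A.powersetCard m,
          Real.exp ((∑ n ∈ S, f n) ^ 2 / (m:ℝ)^2)
        ≤ ((N.choose m : ℝ))⁻¹ * ((N.choose m : ℝ) * Real.exp 1) := by
          apply mul_le_mul_of_nonneg_left hsum_le (by positivity)
      _ = Real.exp 1 := by field_simp
end

section
/- Let N ≥ 2, l and m be nonnegative integers with 0 ≤ l ≤ N−1 and 1 ≤ m ≤ N. Then e^{m(N−m)/(N−1)} ≤ E[exp(|X_l(m,N)|²)] ≤ e^{m²}, where the expectation equals C(N,m)^{−1} · Σ_{S ⊆ {1,…,N}, |S|=m} exp(|Σ_{n∈S} exp(−2πi n l/N)|²). -/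
open Real Finset

/-- counting supersets of B among m-subsets of A -/
lemma count_supersets (A B : Finset ℕ) (m : ℕ) (hB : B ⊆ A) (hm : B.card ≤ m) :
    ((A.powersetCard m).filter (fun S => B ⊆ S)).card
      = (A.card - B.card).choose (m - B.card) := by
  rw [← Finset.card_sdiff_of_subset hB, ← Finset.card_powersetCard]
  apply Finset.card_nbij' (fun S => S \ B) (fun T => T ∪ B)
  · intro S hS
    simp only [Finset.mem_coe, Finset.mem_filter, Finset.mem_powersetCard] at hS ⊢
    obtain ⟨⟨hSA, hcard⟩, hBS⟩ := hS
    exact ⟨Finset.sdiff_subset_sdiff hSA le_rfl,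
      by rw [Finset.card_sdiff_of_subset hBS, hcard]⟩
  · intro T hT
    simp only [Finset.mem_coe, Finset.mem_filter, Finset.mem_powersetCard] at hT ⊢
    obtain ⟨hTA, hcard⟩ := hT
    have hdisj : Disjoint T B := Finset.disjoint_of_subset_left hTA Finset.sdiff_disjoint
    refine ⟨⟨Finset.union_subset (hTA.trans Finset.sdiff_subset) hB, ?_⟩,
      Finset.subset_union_right⟩
    rw [Finset.card_union_of_disjoint hdisj, hcard]
    omega
  · intro S hS
    simp only [Finset.mem_coe, Finset.mem_filter, Finset.mem_powersetCard] at hS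
    exact Finset.sdiff_union_of_subset hS.2
  · intro T hT
    simp only [Finset.mem_coe, Finset.mem_powersetCard] at hT
    have hdisj : Disjoint T B := Finset.disjoint_of_subset_left hT.1 Finset.sdiff_disjoint
    show (T ∪ B) \ B = T
    rw [Finset.union_sdiff_right, Finset.sdiff_eq_self_of_disjoint hdisj]

/-- swap sums -/
lemma sum_powersetCard_double (A : Finset ℕ) (m : ℕ) (h : ℕ → ℕ → ℂ) :
    ∑ S ∈ A.powersetCard m, ∑ n ∈ S, ∑ n' ∈ S, h n n'
      = ∑ n ∈ A, ∑ n' ∈ A,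
          (((A.powersetCard m).filter (fun S => n ∈ S ∧ n' ∈ S)).card : ℂ) * h n n' := by
  have key : ∀ S ∈ A.powersetCard m, (∑ n ∈ S, ∑ n' ∈ S, h n n')
      = ∑ n ∈ A, ∑ n' ∈ A, if n ∈ S ∧ n' ∈ S then h n n' else 0 := by
    intro S hS
    have hSA : S ⊆ A := (Finset.mem_powersetCard.1 hS).1
    have sub : ∀ g : ℕ → ℂ, ∑ n ∈ S, g n = ∑ n ∈ A, if n ∈ S then g n else 0 := by
      intro g
      rw [Finset.sum_ite_mem, Finset.inter_eq_right.2 hSA]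
    rw [sub]
    refine Finset.sum_congr rfl fun n _ => ?_
    by_cases h1 : n ∈ S
    · simp only [h1, if_true, true_and]
      exact sub _
    · simp [h1]
  rw [Finset.sum_congr rfl key, Finset.sum_comm]
  refine Finset.sum_congr rfl fun n _ => ?_
  rw [Finset.sum_comm]
  refine Finset.sum_congr rfl fun n' _ => ?_
  rw [Finset.sum_ite, Finset.sum_const_zero, Finset.sum_const, add_zero, nsmul_eq_mul]

lemma nat_choose_id (N m : ℕ) (hm1 : 1 ≤ m) (hmN : m ≤ N) (hN : 2 ≤ N) :
    m * (N - m) * N.choose m = N * (N - 1) * (N - 2).choose (m - 1) := by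
  obtain ⟨n, rfl⟩ : ∃ n, N = n + 2 := ⟨N - 2, by omega⟩
  obtain ⟨k, rfl⟩ : ∃ k, m = k + 1 := ⟨m - 1, by omega⟩
  simp only [Nat.add_sub_cancel, show n + 2 - 1 = n + 1 from rfl,
    show n + 2 - (k + 1) = n + 1 - k by omega]
  have h1 : (n + 2) * (n + 1).choose k = (n + 2).choose (k + 1) * (k + 1) :=
    Nat.add_one_mul_choose_eq (n + 1) k
  have h2 : (n + 1).choose (k + 1) * (k + 1) = (n + 1).choose k * (n + 1 - k) :=
    Nat.choose_succ_right_eq (n + 1) k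
  have h3 : (n + 1) * n.choose k = (n + 1).choose (k + 1) * (k + 1) :=
    Nat.add_one_mul_choose_eq n k
  calc (k + 1) * (n + 1 - k) * ((n + 2).choose (k + 1))
      = (n + 1 - k) * ((n + 2).choose (k + 1) * (k + 1)) := by ring
    _ = (n + 1 - k) * ((n + 2) * (n + 1).choose k) := by rw [h1]
    _ = (n + 2) * ((n + 1).choose k * (n + 1 - k)) := by ring
    _ = (n + 2) * ((n + 1).choose (k + 1) * (k + 1)) := by rw [h2]
    _ = (n + 2) * ((n + 1) * n.choose k) := by rw [h3]
    _ = (n + 2) * (n + 1) * n.choose k := by ring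

set_option maxHeartbeats 2000000 in
/-- Theorem 2.2 (i): `e^{m(N-m)/(N-1)} ≤ E[exp(|X_l(m,N)|²)] ≤ e^{m²}`. -/
theorem subGaussian_X_bounds' (N l m : ℕ) (hN : 2 ≤ N) (hl : l ≤ N - 1)
    (hm1 : 1 ≤ m) (hmN : m ≤ N) :
    Real.exp ((m : ℝ) * ((N : ℝ) - m) / ((N : ℝ) - 1)) ≤
      ((N.choose m : ℝ))⁻¹ * ∑ S ∈ (Finset.Icc 1 N).powersetCard m,
        Real.exp ((‖(∑ n ∈ S,
          Complex.exp (-(2 * Real.pi * n * l / N : ℝ) * Complex.I))‖) ^ 2) ∧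
    ((N.choose m : ℝ))⁻¹ * ∑ S ∈ (Finset.Icc 1 N).powersetCard m,
        Real.exp ((‖(∑ n ∈ S,
          Complex.exp (-(2 * Real.pi * n * l / N : ℝ) * Complex.I))‖) ^ 2) ≤
      Real.exp ((m : ℝ) ^ 2) := by

  classical
  set z : ℕ → ℂ := fun n => Complex.exp (-(2 * Real.pi * n * l / N : ℝ) * Complex.I) with hz
  set A := Finset.Icc 1 N with hA
  have hAcard : A.card = N := by rw [hA, Nat.card_Icc]; omega
  have hKpos : 0 < N.choose m := Nat.choose_pos hmN
  have hK : (0 : ℝ) < (N.choose m : ℝ) := by exact_mod_cast hKpos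
  have hPcard : (A.powersetCard m).card = N.choose m := by
    rw [Finset.card_powersetCard, hAcard]
  have hzabs : ∀ n, ‖z n‖ = 1 := by
    intro n
    simp only [hz]
    rw [Complex.norm_exp]
    norm_num
  set f : Finset ℕ → ℝ := fun S => (‖∑ n ∈ S, z n‖) ^ 2 with hf
  -- product expansion
  have hprod : ∀ S : Finset ℕ, (∑ n ∈ S, ∑ n' ∈ S, z n * (starRingEnd ℂ) (z n'))
      = ((f S : ℝ) : ℂ) := by
    intro S
    have : (∑ n ∈ S, ∑ n' ∈ S, z n * (starRingEnd ℂ) (z n'))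
        = (∑ n ∈ S, z n) * (starRingEnd ℂ) (∑ n ∈ S, z n) := by
      rw [map_sum, Finset.sum_mul]
      exact Finset.sum_congr rfl fun n _ => by rw [Finset.mul_sum]
    rw [this, Complex.mul_conj]
    norm_cast
    exact (Complex.sq_norm _).symm
  -- upper bound pointwise
  have hub : ∀ S ∈ A.powersetCard m, Real.exp (f S) ≤ Real.exp ((m : ℝ) ^ 2) := by
    intro S hS
    apply Real.exp_le_exp.2
    have h1 : ‖∑ n ∈ S, z n‖ ≤ (m : ℝ) := by
      calc ‖∑ n ∈ S, z n‖ ≤ ∑ n ∈ S, ‖z n‖ :=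
            norm_sum_le _ _
        _ = (m : ℝ) := by
            rw [Finset.sum_congr rfl fun n _ => hzabs n, Finset.sum_const,
              (Finset.mem_powersetCard.1 hS).2]
            simp
    show f S ≤ (m : ℝ) ^ 2
    rw [hf]
    exact pow_le_pow_left₀ (norm_nonneg _) h1 2
  -- upper bound
  have Hupper : ((N.choose m : ℝ))⁻¹ * ∑ S ∈ A.powersetCard m, Real.exp (f S)
      ≤ Real.exp ((m : ℝ) ^ 2) := by
    have := Finset.sum_le_card_nsmul (A.powersetCard m) (fun S => Real.exp (f S))
      (Real.exp ((m : ℝ) ^ 2)) hub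
    rw [hPcard, nsmul_eq_mul] at this
    calc ((N.choose m : ℝ))⁻¹ * ∑ S ∈ A.powersetCard m, Real.exp (f S)
        ≤ ((N.choose m : ℝ))⁻¹ * ((N.choose m : ℝ) * Real.exp ((m : ℝ) ^ 2)) := by
          apply mul_le_mul_of_nonneg_left this (by positivity)
      _ = Real.exp ((m : ℝ) ^ 2) := by field_simp
  -- key sum lower bound
  have hSf : ((N * (N - 2).choose (m - 1) : ℕ) : ℝ) ≤ ∑ S ∈ A.powersetCard m, f S := by
    rcases eq_or_lt_of_le hm1 with hm | hm2
    · -- m = 1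
      have hm' : m = 1 := hm.symm
      subst hm'
      have : ∀ S ∈ A.powersetCard 1, f S = 1 := by
        intro S hS
        obtain ⟨a, rfl⟩ := Finset.card_eq_one.1 (Finset.mem_powersetCard.1 hS).2
        rw [hf]
        simp [hzabs]
      rw [Finset.sum_congr rfl this, Finset.sum_const, hPcard]
      simp
    · -- m ≥ 2
      have hm2 : 2 ≤ m := hm2
      set c1 := (N - 1).choose (m - 1) with hc1
      set c2 := (N - 2).choose (m - 2) with hc2
      set c3 := (N - 2).choose (m - 1) with hc3
      have hpascal : c1 = c2 + c3 := by
        rw [hc1, hc2, hc3, show N - 1 = (N - 2) + 1 by omega,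
          show m - 1 = (m - 2) + 1 by omega]
        exact Nat.choose_succ_succ _ _
      -- counts
      have hcnt : ∀ n ∈ A, ∀ n' ∈ A,
          (((A.powersetCard m).filter (fun S => n ∈ S ∧ n' ∈ S)).card : ℕ)
            = if n' = n then c1 else c2 := by
        intro n hn n' hn'
        by_cases hne : n' = n
        · subst hne
          rw [if_pos rfl]
          have : (A.powersetCard m).filter (fun S => n' ∈ S ∧ n' ∈ S)
              = (A.powersetCard m).filter (fun S => ({n'} : Finset ℕ) ⊆ S) := by
            apply Finset.filter_congr; intro S _; simp
          rw [this, count_supersets A {n'} m (Finset.singleton_subset_iff.2 hn') (by simpa using hm1),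
            Finset.card_singleton, hAcard]
        · rw [if_neg hne]
          have : (A.powersetCard m).filter (fun S => n ∈ S ∧ n' ∈ S)
              = (A.powersetCard m).filter (fun S => ({n, n'} : Finset ℕ) ⊆ S) := by
            apply Finset.filter_congr; intro S _
            simp [Finset.insert_subset_iff]
          rw [this, count_supersets A {n, n'} m
            (by rw [Finset.insert_subset_iff]; exact ⟨hn, Finset.singleton_subset_iff.2 hn'⟩)
            (by rw [Finset.card_pair (fun h => hne h.symm)]; omega),
            Finset.card_pair (fun h => hne h.symm), hAcard]
      -- the complex sum
      have hW : (∑ S ∈ A.powersetCard m, ((f S : ℝ) : ℂ))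
          = (c2 : ℂ) * ((Complex.normSq (∑ n ∈ A, z n) : ℝ) : ℂ) + (c3 : ℂ) * (N : ℂ) := by
        rw [Finset.sum_congr rfl fun S _ => (hprod S).symm, sum_powersetCard_double]
        have step : ∀ n ∈ A, (∑ n' ∈ A,
            (((A.powersetCard m).filter (fun S => n ∈ S ∧ n' ∈ S)).card : ℂ)
              * (z n * (starRingEnd ℂ) (z n')))
            = (c2 : ℂ) * (∑ n' ∈ A, z n * (starRingEnd ℂ) (z n')) + (c3 : ℂ) * 1 := by
          intro n hn
          have : ∀ n' ∈ A, (((A.powersetCard m).filter (fun S => n ∈ S ∧ n' ∈ S)).card : ℂ)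
                * (z n * (starRingEnd ℂ) (z n'))
              = (c2 : ℂ) * (z n * (starRingEnd ℂ) (z n'))
                + (if n' = n then (c3 : ℂ) * (z n' * (starRingEnd ℂ) (z n')) else 0) := by
            intro n' hn'
            rw [hcnt n hn n' hn']
            by_cases hne : n' = n
            · subst hne; rw [if_pos rfl, if_pos rfl, hpascal]
              push_cast; ring
            · rw [if_neg hne, if_neg hne, add_zero]
          rw [Finset.sum_congr rfl this, Finset.sum_add_distrib, ← Finset.mul_sum,
            Finset.sum_ite_eq' A n (fun n' => (c3 : ℂ) * (z n' * (starRingEnd ℂ) (z n'))),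
            if_pos hn, Complex.mul_conj]
          congr 1
          rw [Complex.normSq_eq_norm_sq, hzabs]
          norm_num
        rw [Finset.sum_congr rfl step, Finset.sum_add_distrib, Finset.sum_const, hAcard,
          ← Finset.mul_sum]
        congr 1
        · congr 1
          rw [hprod A]
          norm_cast
          exact Complex.sq_norm _
        · rw [nsmul_eq_mul]; push_cast; ring
      -- take real parts
      have hre : (∑ S ∈ A.powersetCard m, f S)
          = (c2 : ℝ) * Complex.normSq (∑ n ∈ A, z n) + (c3 : ℝ) * N := by
        have := congrArg Complex.re hW
        rw [← Complex.ofReal_sum] at this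
        simpa using this
      rw [hre]
      have : (0:ℝ) ≤ (c2 : ℝ) * Complex.normSq (∑ n ∈ A, z n) :=
        mul_nonneg (by positivity) (Complex.normSq_nonneg _)
      push_cast
      nlinarith
  -- Jensen
  have hwsum : ∑ _S ∈ A.powersetCard m, ((N.choose m : ℝ))⁻¹ = 1 := by
    rw [Finset.sum_const, hPcard, nsmul_eq_mul, mul_inv_cancel₀ (ne_of_gt hK)]
  have hjensen := convexOn_exp.map_sum_le (t := A.powersetCard m)
    (w := fun _ => ((N.choose m : ℝ))⁻¹) (p := f)
    (fun _ _ => by positivity) hwsum (fun _ _ => Set.mem_univ _)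
  simp only [smul_eq_mul] at hjensen
  rw [← Finset.mul_sum, ← Finset.mul_sum] at hjensen
  have Hlower : Real.exp ((m : ℝ) * ((N : ℝ) - m) / ((N : ℝ) - 1))
      ≤ ((N.choose m : ℝ))⁻¹ * ∑ S ∈ A.powersetCard m, Real.exp (f S) := by
    have h1 : (m : ℝ) * ((N : ℝ) - m) / ((N : ℝ) - 1)
        ≤ ((N.choose m : ℝ))⁻¹ * ∑ S ∈ A.powersetCard m, f S := by
      have hid : (m : ℝ) * ((N : ℝ) - m) / ((N : ℝ) - 1)
          = ((N * (N - 2).choose (m - 1) : ℕ) : ℝ) / (N.choose m : ℝ) := by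
        have := nat_choose_id N m hm1 hmN hN
        have hcast : (m : ℝ) * ((N : ℝ) - (m : ℝ)) * (N.choose m : ℝ)
            = (N : ℝ) * ((N : ℝ) - 1) * ((N - 2).choose (m - 1) : ℝ) := by
          have h' : ((m * (N - m) * N.choose m : ℕ) : ℝ)
              = ((N * (N - 1) * (N - 2).choose (m - 1) : ℕ) : ℝ) := by exact_mod_cast this
          push_cast [Nat.cast_sub hmN, Nat.cast_sub (by omega : 1 ≤ N)] at h'
          linarith
        have hN1 : (0:ℝ) < (N : ℝ) - 1 := by
          have : (2:ℝ) ≤ (N : ℝ) := by exact_mod_cast hN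
          linarith
        field_simp
        push_cast
        nlinarith [hcast]
      rw [hid, div_eq_inv_mul]
      exact mul_le_mul_of_nonneg_left hSf (by positivity)
    calc Real.exp ((m : ℝ) * ((N : ℝ) - m) / ((N : ℝ) - 1))
        ≤ Real.exp (((N.choose m : ℝ))⁻¹ * ∑ S ∈ A.powersetCard m, f S) :=
          Real.exp_le_exp.2 h1
      _ ≤ ((N.choose m : ℝ))⁻¹ * ∑ S ∈ A.powersetCard m, Real.exp (f S) := hjensen
  exact ⟨Hlower, Hupper⟩
end

section
/- Let N ≥ 2, l and m be integers with 1 ≤ l ≤ N−1, N ≠ 2l and 1 ≤ m ≤ N. Then e^{m(N−m)/(2(N−1))} ≤ E[exp((V_l(m,N))²)] ≤ e^{m²}, where the expectation equals C(N,m)^{−1} · Σ_{S ⊆ {1,…,N}, |S|=m} exp((Σ_{n∈S} sin(2πnl/N))²). -/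
open Real Finset

-- Geometric sum of roots of unity over Icc 1 N
lemma geom_exp_sum_zero (N k : ℕ) (hN : 0 < N) (hk : ¬ N ∣ k) :
    ∑ n ∈ Finset.Icc 1 N, Complex.exp (2 * Real.pi * Complex.I * (k * n) / N) = 0 := by
  have hprim : IsPrimitiveRoot (Complex.exp (2 * Real.pi * Complex.I / N)) N :=
    Complex.isPrimitiveRoot_exp N hN.ne'
  set ζ := Complex.exp (2 * Real.pi * Complex.I / N) with hζ
  have hpow : ∀ j : ℕ, ζ ^ j = Complex.exp (2 * Real.pi * Complex.I * j / N) := by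
    intro j
    rw [hζ, ← Complex.exp_nat_mul]
    congr 1; ring
  have hc1 : ζ ^ k ≠ 1 := fun h => hk ((hprim.pow_eq_one_iff_dvd k).mp h)
  have hcN : (ζ ^ k) ^ N = 1 := by
    rw [← pow_mul, mul_comm, pow_mul, hprim.pow_eq_one, one_pow]
  have hterm : ∀ n : ℕ, Complex.exp (2 * Real.pi * Complex.I * (k * n) / N) = (ζ ^ k) ^ n := by
    intro n
    rw [← pow_mul, hpow (k * n)]
    congr 1
    push_cast; ring
  rw [Finset.sum_congr rfl fun n _ => hterm n]
  rw [← Finset.Ico_add_one_right_eq_Icc, Finset.sum_Ico_eq_sum_range]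
  have h2 : ∑ i ∈ Finset.range N, (ζ ^ k) ^ (1 + i)
      = (ζ ^ k) * ∑ i ∈ Finset.range N, (ζ ^ k) ^ i := by
    rw [Finset.mul_sum]
    exact Finset.sum_congr rfl fun i _ => by rw [pow_add, pow_one]
  rw [show N + 1 - 1 = N from rfl, h2, geom_sum_eq hc1, hcN]
  simp

lemma sin_sum_zero (N k : ℕ) (hN : 0 < N) (hk : ¬ N ∣ k) :
    ∑ n ∈ Finset.Icc 1 N, Real.sin (2 * Real.pi * n * k / N) = 0 := by
  have h := geom_exp_sum_zero N k hN hk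
  have him : ∀ n : ℕ, Real.sin (2 * Real.pi * n * k / N)
      = (Complex.exp (2 * Real.pi * Complex.I * (k * n) / N)).im := by
    intro n
    rw [show (2 * Real.pi * Complex.I * (k * n) / N : ℂ)
        = ((2 * Real.pi * n * k / N : ℝ) : ℂ) * Complex.I by push_cast; ring]
    rw [Complex.exp_ofReal_mul_I_im]
  rw [Finset.sum_congr rfl fun n _ => him n, ← Complex.im_sum, h]
  rfl

lemma cos_sum_zero (N k : ℕ) (hN : 0 < N) (hk : ¬ N ∣ k) :
    ∑ n ∈ Finset.Icc 1 N, Real.cos (2 * Real.pi * n * k / N) = 0 := by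
  have h := geom_exp_sum_zero N k hN hk
  have hre : ∀ n : ℕ, Real.cos (2 * Real.pi * n * k / N)
      = (Complex.exp (2 * Real.pi * Complex.I * (k * n) / N)).re := by
    intro n
    rw [show (2 * Real.pi * Complex.I * (k * n) / N : ℂ)
        = ((2 * Real.pi * n * k / N : ℝ) : ℂ) * Complex.I by push_cast; ring]
    rw [Complex.exp_ofReal_mul_I_re]
  rw [Finset.sum_congr rfl fun n _ => hre n, ← Complex.re_sum, h]
  rfl

lemma count_one (T : Finset ℕ) (x : ℕ) (hx : x ∈ T) (m : ℕ) :
    ((T.powersetCard (m+1)).filter (fun S => x ∈ S)).card = (T.card - 1).choose m := by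
  have hc : (T.erase x).card = T.card - 1 := Finset.card_erase_of_mem hx
  rw [← hc, ← Finset.card_powersetCard m (T.erase x)]
  apply Finset.card_nbij' (fun S => S.erase x) (fun S => insert x S)
  · intro S hS
    simp only [Finset.mem_coe, Finset.mem_filter, Finset.mem_powersetCard] at hS ⊢
    obtain ⟨⟨hsub, hcard⟩, hxS⟩ := hS
    exact ⟨Finset.erase_subset_erase x hsub, by
      rw [Finset.card_erase_of_mem hxS, hcard]; rfl⟩
  · intro S hS
    simp only [Finset.mem_coe, Finset.mem_powersetCard, Finset.mem_filter] at hS ⊢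
    obtain ⟨hsub, hcard⟩ := hS
    have hxnS : x ∉ S := fun h => Finset.notMem_erase x T (hsub h)
    refine ⟨⟨Finset.insert_subset hx (hsub.trans (Finset.erase_subset x T)), ?_⟩,
      Finset.mem_insert_self x S⟩
    rw [Finset.card_insert_of_notMem hxnS, hcard]
  · intro S hS
    simp only [Finset.mem_coe, Finset.mem_filter] at hS
    exact Finset.insert_erase hS.2
  · intro S hS
    simp only [Finset.mem_coe, Finset.mem_powersetCard] at hS
    have hxnS : x ∉ S := fun h => Finset.notMem_erase x T (hS.1 h)
    exact Finset.erase_insert hxnS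

lemma count_two (T : Finset ℕ) {x y : ℕ} (hx : x ∈ T) (hy : y ∈ T) (hxy : x ≠ y) (m : ℕ) :
    ((T.powersetCard (m+2)).filter (fun S => x ∈ S ∧ y ∈ S)).card
      = (T.card - 2).choose m := by
  have hyT : y ∈ T.erase x := Finset.mem_erase.mpr ⟨hxy.symm, hy⟩
  have hcard : ((T.erase x).erase y).card = T.card - 2 := by
    rw [Finset.card_erase_of_mem hyT, Finset.card_erase_of_mem hx]
    omega
  rw [← hcard, ← Finset.card_powersetCard m ((T.erase x).erase y)]
  apply Finset.card_nbij' (fun S => (S.erase x).erase y) (fun S => insert x (insert y S))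
  · intro S hS
    simp only [Finset.mem_coe, Finset.mem_filter, Finset.mem_powersetCard] at hS ⊢
    obtain ⟨⟨hsub, hcard⟩, hxS, hyS⟩ := hS
    refine ⟨?_, ?_⟩
    · exact Finset.erase_subset_erase y (Finset.erase_subset_erase x hsub)
    · rw [Finset.card_erase_of_mem (Finset.mem_erase.mpr ⟨hxy.symm, hyS⟩),
        Finset.card_erase_of_mem hxS, hcard]
      omega
  · intro S hS
    simp only [Finset.mem_coe, Finset.mem_powersetCard, Finset.mem_filter] at hS ⊢
    obtain ⟨hsub, hcard⟩ := hS
    have hsT : S ⊆ T := hsub.trans ((Finset.erase_subset y _).trans (Finset.erase_subset x T))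
    have hxnS : x ∉ S := fun h => Finset.notMem_erase x T ((Finset.erase_subset y _) (hsub h))
    have hynS : y ∉ S := fun h => Finset.notMem_erase y (T.erase x) (hsub h)
    have hxny : x ∉ insert y S := by
      simp only [Finset.mem_insert]
      rintro (h | h)
      exacts [hxy h, hxnS h]
    refine ⟨⟨?_, ?_⟩, Finset.mem_insert_self x _, Finset.mem_insert_of_mem
      (Finset.mem_insert_self y S)⟩
    · exact Finset.insert_subset hx (Finset.insert_subset hy hsT)
    · rw [Finset.card_insert_of_notMem hxny, Finset.card_insert_of_notMem hynS, hcard]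
  · intro S hS
    simp only [Finset.mem_coe, Finset.mem_filter] at hS
    obtain ⟨-, hxS, hyS⟩ := hS
    beta_reduce
    rw [Finset.insert_erase (Finset.mem_erase.mpr ⟨hxy.symm, hyS⟩), Finset.insert_erase hxS]
  · intro S hS
    simp only [Finset.mem_coe, Finset.mem_powersetCard] at hS
    have hxnS : x ∉ S := fun h => Finset.notMem_erase x T ((Finset.erase_subset y _) (hS.1 h))
    have hynS : y ∉ S := fun h => Finset.notMem_erase y (T.erase x) (hS.1 h)
    have hxny : x ∉ insert y S := by
      simp only [Finset.mem_insert]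
      rintro (h | h)
      exacts [hxy h, hxnS h]
    beta_reduce
    rw [Finset.erase_insert hxny, Finset.erase_insert hynS]

lemma sq_sum_powersetCard (T : Finset ℕ) (a : ℕ → ℝ) (m : ℕ) (hm : 1 ≤ m) :
    ∑ S ∈ T.powersetCard m, (∑ n ∈ S, a n)^2
      = (((T.card - 1).choose (m-1) : ℕ) : ℝ) * ∑ n ∈ T, (a n)^2
        + (if 2 ≤ m then (((T.card - 2).choose (m-2) : ℕ) : ℝ) else 0) *
          ∑ n ∈ T, ∑ n' ∈ T.erase n, a n * a n' := by
  rcases (show m = 1 ∨ 2 ≤ m by omega) with rfl | h2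
  · rw [Finset.powersetCard_one, Finset.sum_map]
    simp
  · obtain ⟨k, rfl⟩ : ∃ k, m = k + 2 := ⟨m - 2, by omega⟩
    have hif : (2:ℕ) ≤ k + 2 := by omega
    rw [if_pos hif]
    have step1 : ∀ S ∈ T.powersetCard (k+2), (∑ n ∈ S, a n)^2
        = ∑ n ∈ T, ∑ n' ∈ T, if n ∈ S ∧ n' ∈ S then a n * a n' else 0 := by
      intro S hS
      have hsub : S ⊆ T := (Finset.mem_powersetCard.mp hS).1
      have h1 : ∀ f : ℕ → ℝ, ∑ n ∈ T, (if n ∈ S then f n else 0) = ∑ n ∈ S, f n := by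
        intro f
        rw [Finset.sum_ite_mem, Finset.inter_eq_right.mpr hsub]
      rw [sq, Finset.sum_mul_sum, ← h1]
      refine Finset.sum_congr rfl fun n _ => ?_
      by_cases hn : n ∈ S
      · simp only [hn, if_true, true_and, ← h1]
      · simp [hn]
    calc ∑ S ∈ T.powersetCard (k+2), (∑ n ∈ S, a n)^2
        = ∑ S ∈ T.powersetCard (k+2), ∑ n ∈ T, ∑ n' ∈ T,
            if n ∈ S ∧ n' ∈ S then a n * a n' else 0 := Finset.sum_congr rfl step1
      _ = ∑ n ∈ T, ∑ n' ∈ T, ∑ S ∈ T.powersetCard (k+2),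
            if n ∈ S ∧ n' ∈ S then a n * a n' else 0 := by
          rw [Finset.sum_comm]
          exact Finset.sum_congr rfl fun n _ => Finset.sum_comm
      _ = ∑ n ∈ T, ∑ n' ∈ T,
            ((((T.powersetCard (k+2)).filter fun S => n ∈ S ∧ n' ∈ S).card : ℕ) : ℝ)
              * (a n * a n') := by
          refine Finset.sum_congr rfl fun n _ => Finset.sum_congr rfl fun n' _ => ?_
          rw [← Finset.sum_filter, Finset.sum_const, nsmul_eq_mul]
      _ = ∑ n ∈ T, ((((T.card - 1).choose (k+1) : ℕ) : ℝ) * (a n)^2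
            + ∑ n' ∈ T.erase n, (((T.card - 2).choose k : ℕ) : ℝ) * (a n * a n')) := by
          refine Finset.sum_congr rfl fun n hn => ?_
          rw [← Finset.add_sum_erase _ _ hn]
          congr 1
          · have : ((T.powersetCard (k+2)).filter fun S => n ∈ S ∧ n ∈ S)
                = (T.powersetCard (k+2)).filter fun S => n ∈ S := by
              simp
            rw [this, count_one T n hn (k+1), ← sq]
          · refine Finset.sum_congr rfl fun n' hn' => ?_
            obtain ⟨hne, hn'T⟩ := Finset.mem_erase.mp hn'
            rw [count_two T hn hn'T (Ne.symm hne) k]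
      _ = (((T.card - 1).choose (k+1) : ℕ) : ℝ) * ∑ n ∈ T, (a n)^2
            + (((T.card - 2).choose k : ℕ) : ℝ)
              * ∑ n ∈ T, ∑ n' ∈ T.erase n, a n * a n' := by
          rw [Finset.sum_add_distrib, Finset.mul_sum, Finset.mul_sum]
          congr 1
          exact Finset.sum_congr rfl fun n _ => (Finset.mul_sum _ _ _).symm

lemma choose_id (n k : ℕ) :
    (n+2) * (n+1) * n.choose k = (n+2).choose (k+1) * ((k+1) * (n+1-k)) := by
  have h1 := Nat.add_one_mul_choose_eq (n+1) k
  have h2 := Nat.choose_mul_succ_eq n k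
  calc (n+2)*(n+1)*n.choose k = (n+2) * (n.choose k * (n+1)) := by ring
    _ = (n+2) * ((n+1).choose k * (n+1-k)) := by rw [h2]
    _ = ((n+1+1) * (n+1).choose k) * (n+1-k) := by ring
    _ = ((n+2).choose (k+1) * (k+1)) * (n+1-k) := by rw [h1]
    _ = (n+2).choose (k+1) * ((k+1)*(n+1-k)) := by ring

lemma numeric_id (N m : ℕ) (hN : 2 ≤ N) (hm1 : 1 ≤ m) (hmN : m ≤ N) :
    (((N - 1).choose (m-1) : ℕ) : ℝ) * ((N:ℝ)/2)
      + (if 2 ≤ m then (((N - 2).choose (m-2) : ℕ):ℝ) else 0) * (-((N:ℝ)/2))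
    = (N.choose m : ℝ) * ((m:ℝ) * ((N:ℝ) - m) / (2 * ((N:ℝ) - 1))) := by
  obtain ⟨n, rfl⟩ : ∃ n, N = n + 2 := ⟨N-2, by omega⟩
  have hne : ((n:ℝ) + 2) - 1 ≠ 0 := by
    have : (0:ℝ) ≤ (n:ℝ) := Nat.cast_nonneg n
    intro h; nlinarith
  rcases (show m = 1 ∨ 2 ≤ m by omega) with rfl | h2
  · simp only [show (1:ℕ) - 1 = 0 from rfl, Nat.choose_zero_right, Nat.choose_one_right,
      if_neg (by omega : ¬ (2:ℕ) ≤ 1)]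
    push_cast
    field_simp
    ring
  · obtain ⟨k, rfl⟩ : ∃ k, m = k + 2 := ⟨m-2, by omega⟩
    rw [if_pos h2]
    have hkn : k ≤ n := by omega
    have pascal : (n+1).choose (k+1) = n.choose k + n.choose (k+1) := Nat.choose_succ_succ n k
    have hid := choose_id n (k+1)
    rw [show n + 1 - (k+1) = n - k by omega] at hid
    have hidR : ((n:ℝ)+2)*((n:ℝ)+1)*(n.choose (k+1) : ℝ)
        = ((n+2).choose (k+2) : ℝ)*(((k:ℝ)+2)*((n:ℝ)-(k:ℝ))) := by
      have := congrArg (fun x : ℕ => (x : ℝ)) hid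
      push_cast [Nat.cast_sub hkn] at this
      convert this using 2 <;> push_cast <;> ring
    rw [show n + 2 - 1 = n + 1 from rfl, show n + 2 - 2 = n from rfl,
      show k + 2 - 1 = k + 1 from rfl, show k + 2 - 2 = k from rfl, pascal]
    push_cast
    field_simp
    linear_combination hidR

/-- Theorem 2.2 (iii): with `1 ≤ l ≤ N-1`, `N ≠ 2l`,
`e^{m(N-m)/(2(N-1))} ≤ E[exp(V_l(m,N)²)] ≤ e^{m²}`. -/
theorem subGaussian_V_bounds' (N l m : ℕ) (hN : 2 ≤ N) (hl1 : 1 ≤ l) (hl : l ≤ N - 1)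
    (hNl : N ≠ 2 * l) (hm1 : 1 ≤ m) (hmN : m ≤ N) :
    Real.exp ((m : ℝ) * ((N : ℝ) - m) / (2 * ((N : ℝ) - 1))) ≤
      ((N.choose m : ℝ))⁻¹ * ∑ S ∈ (Finset.Icc 1 N).powersetCard m,
        Real.exp ((∑ n ∈ S, Real.sin (2 * Real.pi * n * l / N)) ^ 2) ∧
    ((N.choose m : ℝ))⁻¹ * ∑ S ∈ (Finset.Icc 1 N).powersetCard m,
        Real.exp ((∑ n ∈ S, Real.sin (2 * Real.pi * n * l / N)) ^ 2) ≤
      Real.exp ((m : ℝ) ^ 2) := by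
  have hN0 : 0 < N := by omega
  set T := Finset.Icc 1 N with hT
  have hTcard : T.card = N := by rw [hT, Nat.card_Icc]; omega
  set a : ℕ → ℝ := fun n => Real.sin (2 * Real.pi * n * l / N) with ha
  have hndvd1 : ¬ N ∣ l := by
    rintro ⟨t, rfl⟩
    rcases (show t = 0 ∨ 1 ≤ t by omega) with rfl | h
    · omega
    · have := Nat.le_mul_of_pos_right N h; omega
  have hndvd2 : ¬ N ∣ 2 * l := by
    rintro ⟨t, ht⟩
    rcases (show t = 0 ∨ t = 1 ∨ 2 ≤ t by omega) with rfl | rfl | h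
    · omega
    · omega
    · have : N * 2 ≤ N * t := Nat.mul_le_mul_left N h
      omega
  have hsin0 : ∑ n ∈ T, a n = 0 := sin_sum_zero N l hN0 hndvd1
  have hcos0 : ∑ n ∈ T, Real.cos (2 * Real.pi * n * (2*l : ℕ) / N) = 0 :=
    cos_sum_zero N (2*l) hN0 hndvd2
  have hsin2 : ∑ n ∈ T, (a n)^2 = (N:ℝ) / 2 := by
    have hterm : ∀ n : ℕ, (a n)^2
        = 1/2 - Real.cos (2 * Real.pi * n * (2*l : ℕ) / N) / 2 := by
      intro n
      have h2θ : (2 * Real.pi * n * ((2*l : ℕ):ℝ) / N) = 2 * (2 * Real.pi * n * l / N) := by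
        push_cast; ring
      rw [ha]
      simp only []
      rw [Real.sin_sq, Real.cos_sq, h2θ]
      ring
    rw [Finset.sum_congr rfl fun n _ => hterm n, Finset.sum_sub_distrib,
      Finset.sum_const, hTcard, ← Finset.sum_div, hcos0]
    simp
    ring
  have hcross : ∑ n ∈ T, ∑ n' ∈ T.erase n, a n * a n' = -((N:ℝ)/2) := by
    have h0 : ∑ n ∈ T, ∑ n' ∈ T, a n * a n' = 0 := by
      rw [← Finset.sum_mul_sum, hsin0, zero_mul]
    have hsplit : ∀ n ∈ T, ∑ n' ∈ T, a n * a n'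
        = a n * a n + ∑ n' ∈ T.erase n, a n * a n' :=
      fun n hn => (Finset.add_sum_erase T _ hn).symm
    rw [Finset.sum_congr rfl hsplit, Finset.sum_add_distrib] at h0
    have hsq : ∑ n ∈ T, a n * a n = ∑ n ∈ T, (a n)^2 :=
      Finset.sum_congr rfl fun n _ => (sq (a n)).symm
    rw [hsq, hsin2] at h0
    linarith
  have hkey : ∑ S ∈ T.powersetCard m, (∑ n ∈ S, a n)^2
      = (N.choose m : ℝ) * ((m:ℝ) * ((N:ℝ) - m) / (2 * ((N:ℝ) - 1))) := by
    rw [sq_sum_powersetCard T a m hm1, hTcard, hsin2, hcross]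
    exact numeric_id N m hN hm1 hmN
  have hchoose_pos : 0 < (N.choose m : ℝ) := by exact_mod_cast Nat.choose_pos hmN
  have hcardP : (T.powersetCard m).card = N.choose m := by
    rw [Finset.card_powersetCard, hTcard]
  constructor
  · have hw : ∑ _S ∈ T.powersetCard m, ((N.choose m : ℝ))⁻¹ = 1 := by
      rw [Finset.sum_const, hcardP, nsmul_eq_mul, mul_inv_cancel₀ hchoose_pos.ne']
    have hj := convexOn_exp.map_sum_le (t := T.powersetCard m)
      (w := fun _ => ((N.choose m : ℝ))⁻¹) (p := fun S => (∑ n ∈ S, a n)^2)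
      (fun _ _ => by positivity) hw (fun _ _ => Set.mem_univ _)
    simp only [smul_eq_mul] at hj
    have harg : ∑ S ∈ T.powersetCard m, ((N.choose m : ℝ))⁻¹ * (∑ n ∈ S, a n)^2
        = (m:ℝ) * ((N:ℝ) - m) / (2 * ((N:ℝ) - 1)) := by
      rw [← Finset.mul_sum, hkey, inv_mul_cancel_left₀ hchoose_pos.ne']
    rw [harg, ← Finset.mul_sum] at hj
    exact hj
  · have hbound : ∀ S ∈ T.powersetCard m,
        Real.exp ((∑ n ∈ S, a n)^2) ≤ Real.exp ((m:ℝ)^2) := by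
      intro S hS
      obtain ⟨hsub, hcardS⟩ := Finset.mem_powersetCard.mp hS
      have h1 : ∑ n ∈ S, a n ≤ (m:ℝ) := by
        calc ∑ n ∈ S, a n ≤ ∑ _n ∈ S, (1:ℝ) :=
              Finset.sum_le_sum fun n _ => Real.sin_le_one _
          _ = (m:ℝ) := by rw [Finset.sum_const, hcardS, nsmul_eq_mul, mul_one]
      have h2 : -(m:ℝ) ≤ ∑ n ∈ S, a n := by
        calc -(m:ℝ) = ∑ _n ∈ S, (-1:ℝ) := by
              rw [Finset.sum_const, hcardS, nsmul_eq_mul]; ring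
          _ ≤ ∑ n ∈ S, a n := Finset.sum_le_sum fun n _ => Real.neg_one_le_sin _
      exact Real.exp_le_exp.mpr (sq_le_sq' h2 h1)
    calc ((N.choose m : ℝ))⁻¹ * ∑ S ∈ T.powersetCard m, Real.exp ((∑ n ∈ S, a n)^2)
        ≤ ((N.choose m : ℝ))⁻¹ * ∑ _S ∈ T.powersetCard m, Real.exp ((m:ℝ)^2) :=
          mul_le_mul_of_nonneg_left (Finset.sum_le_sum hbound)
            (inv_nonneg.mpr hchoose_pos.le)
      _ = Real.exp ((m:ℝ)^2) := by
          rw [Finset.sum_const, hcardP, nsmul_eq_mul, ← mul_assoc,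
            inv_mul_cancel₀ hchoose_pos.ne', one_mul]
end

section
/- Let N ≥ 2, l and m be nonnegative integers with 0 ≤ l ≤ N−1 and 1 ≤ m ≤ N. Then √(m(N−m)/(2(N−1)·ln 2)) ≤ ‖U_l(m,N)‖_{ψ₂} ≤ m/√(ln 2), where ‖U_l(m,N)‖_{ψ₂} = inf{K > 0 : C(N,m)^{−1} Σ_{S ⊆ {1,…,N}, |S|=m} exp((Σ_{n∈S} cos(2πnl/N))²/K²) ≤ 2}. -/
open Real Finset

lemma card_filter_mem_powersetCard {s : Finset ℕ} {n : ℕ} (hn : n ∈ s) (m : ℕ) :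
    ((s.powersetCard (m+1)).filter (fun S => n ∈ S)).card = (s.card - 1).choose m := by
  rw [← Finset.card_erase_of_mem hn, ← Finset.card_powersetCard m (s.erase n)]
  refine Finset.card_bij' (fun S _ => S.erase n) (fun T _ => insert n T) ?hi ?hj ?li ?ri
  case hi =>
    intro S hS
    simp only [Finset.mem_filter, Finset.mem_powersetCard] at hS
    simp only [Finset.mem_powersetCard]
    exact ⟨Finset.erase_subset_erase n hS.1.1,
      by rw [Finset.card_erase_of_mem hS.2, hS.1.2]; rfl⟩
  case hj =>
    intro T hT
    simp only [Finset.mem_powersetCard] at hT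
    have hnT : n ∉ T := fun h => (Finset.mem_erase.1 (hT.1 h)).1 rfl
    simp only [Finset.mem_filter, Finset.mem_powersetCard]
    refine ⟨⟨Finset.insert_subset hn (hT.1.trans (Finset.erase_subset n s)), ?_⟩,
      Finset.mem_insert_self n T⟩
    rw [Finset.card_insert_of_notMem hnT, hT.2]
  case li =>
    intro S hS
    simp only [Finset.mem_filter] at hS
    exact Finset.insert_erase hS.2
  case ri =>
    intro T hT
    simp only [Finset.mem_powersetCard] at hT
    exact Finset.erase_insert (fun h => (Finset.mem_erase.1 (hT.1 h)).1 rfl)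

lemma card_filter_pair_powersetCard {s : Finset ℕ} {n n' : ℕ} (hn : n ∈ s) (hn' : n' ∈ s)
    (hne : n ≠ n') (m : ℕ) :
    ((s.powersetCard (m+2)).filter (fun S => n ∈ S ∧ n' ∈ S)).card
      = (s.card - 2).choose m := by
  have hn'e : n' ∈ s.erase n := Finset.mem_erase.2 ⟨hne.symm, hn'⟩
  have h2 : s.card - 2 = (s.erase n).card - 1 := by
    rw [Finset.card_erase_of_mem hn]; omega
  rw [h2, ← card_filter_mem_powersetCard hn'e m]
  refine Finset.card_bij' (fun S _ => S.erase n) (fun T _ => insert n T) ?hi ?hj ?li ?ri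
  case hi =>
    intro S hS
    simp only [Finset.mem_filter, Finset.mem_powersetCard] at hS
    simp only [Finset.mem_filter, Finset.mem_powersetCard]
    exact ⟨⟨Finset.erase_subset_erase n hS.1.1,
      by rw [Finset.card_erase_of_mem hS.2.1, hS.1.2]; rfl⟩,
      Finset.mem_erase.2 ⟨hne.symm, hS.2.2⟩⟩
  case hj =>
    intro T hT
    simp only [Finset.mem_filter, Finset.mem_powersetCard] at hT
    have hnT : n ∉ T := fun h => (Finset.mem_erase.1 (hT.1.1 h)).1 rfl
    simp only [Finset.mem_filter, Finset.mem_powersetCard]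
    refine ⟨⟨Finset.insert_subset hn (hT.1.1.trans (Finset.erase_subset n s)), ?_⟩,
      Finset.mem_insert_self n T, Finset.mem_insert_of_mem hT.2⟩
    rw [Finset.card_insert_of_notMem hnT, hT.1.2]
  case li =>
    intro S hS
    simp only [Finset.mem_filter] at hS
    exact Finset.insert_erase hS.2.1
  case ri =>
    intro T hT
    simp only [Finset.mem_filter, Finset.mem_powersetCard] at hT
    exact Finset.erase_insert (fun h => (Finset.mem_erase.1 (hT.1.1 h)).1 rfl)

lemma card_filter_pair_powersetCard_one {s : Finset ℕ} {n n' : ℕ} (hne : n ≠ n') :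
    ((s.powersetCard 1).filter (fun S => n ∈ S ∧ n' ∈ S)).card = 0 := by
  rw [Finset.card_eq_zero, Finset.filter_eq_empty_iff]
  intro S hS
  simp only [Finset.mem_powersetCard] at hS
  rintro ⟨h1, h2⟩
  obtain ⟨a, rfl⟩ := Finset.card_eq_one.1 hS.2
  simp only [Finset.mem_singleton] at h1 h2
  exact hne (h1.trans h2.symm)

lemma sum_powersetCard_sum (s : Finset ℕ) (m : ℕ) (g : ℕ → ℝ) :
    ∑ S ∈ s.powersetCard m, ∑ n ∈ S, g n
      = ∑ n ∈ s, (((s.powersetCard m).filter (fun S => n ∈ S)).card : ℝ) * g n := by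
  have key : ∀ S ∈ s.powersetCard m,
      ∑ n ∈ S, g n = ∑ n ∈ s, if n ∈ S then g n else 0 := by
    intro S hS
    have hSs : S ⊆ s := (Finset.mem_powersetCard.1 hS).1
    rw [Finset.sum_ite_mem, Finset.inter_eq_right.2 hSs]
  rw [Finset.sum_congr rfl key, Finset.sum_comm]
  refine Finset.sum_congr rfl fun n _ => ?_
  rw [← Finset.sum_filter, Finset.sum_const, nsmul_eq_mul]

lemma sum_powersetCard_sum_pair (s : Finset ℕ) (m : ℕ) (g : ℕ → ℕ → ℝ) :
    ∑ S ∈ s.powersetCard m, ∑ n ∈ S, ∑ n' ∈ S.erase n, g n n'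
      = ∑ n ∈ s, ∑ n' ∈ s.erase n,
          (((s.powersetCard m).filter (fun S => n ∈ S ∧ n' ∈ S)).card : ℝ) * g n n' := by
  have key : ∀ S ∈ s.powersetCard m,
      ∑ n ∈ S, ∑ n' ∈ S.erase n, g n n'
        = ∑ n ∈ s, ∑ n' ∈ s.erase n, if n ∈ S ∧ n' ∈ S then g n n' else 0 := by
    intro S hS
    have hSs : S ⊆ s := (Finset.mem_powersetCard.1 hS).1
    have h1 : ∀ n : ℕ, S.erase n = (s.erase n) ∩ S := by
      intro n
      ext n'
      simp only [Finset.mem_erase, Finset.mem_inter]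
      exact ⟨fun h => ⟨⟨h.1, hSs h.2⟩, h.2⟩, fun h => ⟨h.1.1, h.2⟩⟩
    calc ∑ n ∈ S, ∑ n' ∈ S.erase n, g n n'
        = ∑ n ∈ s ∩ S, ∑ n' ∈ (s.erase n) ∩ S, g n n' := by
          rw [Finset.inter_eq_right.2 hSs]
          exact Finset.sum_congr rfl fun n _ => by rw [h1 n]
      _ = ∑ n ∈ s, if n ∈ S then (∑ n' ∈ s.erase n, if n' ∈ S then g n n' else 0) else 0 := by
          simp only [Finset.sum_ite_mem]
      _ = ∑ n ∈ s, ∑ n' ∈ s.erase n, if n ∈ S ∧ n' ∈ S then g n n' else 0 := by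
          refine Finset.sum_congr rfl fun n _ => ?_
          split_ifs with h
          · exact Finset.sum_congr rfl fun n' _ => by simp [h]
          · simp [h]
  rw [Finset.sum_congr rfl key, Finset.sum_comm]
  refine Finset.sum_congr rfl fun n _ => ?_
  rw [Finset.sum_comm]
  refine Finset.sum_congr rfl fun n' _ => ?_
  rw [← Finset.sum_filter, Finset.sum_const, nsmul_eq_mul]

lemma sum_cos_multiples (N k : ℕ) (hN : 1 ≤ N) :
    ∑ n ∈ Finset.Icc 1 N, Real.cos (2 * Real.pi * n * k / N)
      = if N ∣ k then (N : ℝ) else 0 := by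
  have hN0 : (N : ℂ) ≠ 0 := Nat.cast_ne_zero.2 (by omega)
  set z : ℂ := Complex.exp (2 * Real.pi * Complex.I * k / N) with hz
  have hre : ∀ n : ℕ, Real.cos (2 * Real.pi * n * k / N) = (z ^ n).re := by
    intro n
    rw [hz, ← Complex.exp_nat_mul,
      show (n : ℂ) * (2 * (Real.pi : ℂ) * Complex.I * k / N)
        = ((2 * Real.pi * n * k / N : ℝ) : ℂ) * Complex.I by push_cast; ring,
      Complex.exp_ofReal_mul_I_re]
  have hsum : ∑ n ∈ Finset.Icc 1 N, z ^ n = if N ∣ k then (N : ℂ) else 0 := by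
    by_cases hdvd : N ∣ k
    · obtain ⟨t, rfl⟩ := hdvd
      have hz1 : z = 1 := by
        rw [hz, show (2 : ℂ) * Real.pi * Complex.I * (↑(N * t)) / N
            = (t : ℤ) * (2 * Real.pi * Complex.I) by push_cast; field_simp]
        exact Complex.exp_int_mul_two_pi_mul_I t
      simp [hz1, Nat.card_Icc]
    · have hz1 : z ≠ 1 := by
        intro h
        rw [hz, Complex.exp_eq_one_iff] at h
        obtain ⟨t, ht⟩ := h
        apply hdvd
        have hne : (2 * (Real.pi : ℂ) * Complex.I) ≠ 0 := by
          simp [Real.pi_ne_zero, Complex.I_ne_zero, Complex.ofReal_ne_zero]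
        have h2 : (k : ℂ) / N = t :=
          mul_left_cancel₀ hne (by
            rw [show (2 * (Real.pi : ℂ) * Complex.I) * ((k : ℂ) / N)
              = 2 * (Real.pi : ℂ) * Complex.I * (k : ℂ) / N by ring, ht]
            ring)
        have h2' : (k : ℂ) = ((t * N : ℤ) : ℂ) := by
          push_cast
          rw [← h2]
          field_simp
        have h3 : (k : ℤ) = t * N := by exact_mod_cast h2'
        exact Int.natCast_dvd_natCast.mp ⟨t, by rw [h3]; ring⟩
      have hzN : z ^ N = 1 := by
        rw [hz, ← Complex.exp_nat_mul,
          show (N : ℂ) * (2 * Real.pi * Complex.I * k / N)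
            = (k : ℤ) * (2 * Real.pi * Complex.I) by push_cast; field_simp]
        exact Complex.exp_int_mul_two_pi_mul_I k
      rw [if_neg hdvd, ← Finset.Ico_add_one_right_eq_Icc, Finset.sum_Ico_eq_sum_range]
      have hNN : N + 1 - 1 = N := rfl
      rw [hNN]
      have : ∑ i ∈ Finset.range N, z ^ (1 + i) = z * ∑ i ∈ Finset.range N, z ^ i := by
        rw [Finset.mul_sum]
        exact Finset.sum_congr rfl fun i _ => by rw [pow_add, pow_one]
      rw [this, geom_sum_eq hz1, hzN]
      simp
  have hfin := congrArg Complex.re hsum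
  rw [Complex.re_sum] at hfin
  simp only [← hre] at hfin
  rw [hfin]
  split_ifs <;> simp

lemma choose_identity (n k : ℕ) :
    (n + 1) * n.choose k = (k + 1) * (n + 1).choose (k + 1) := by
  rw [show n + 1 = Nat.succ n from rfl, show k + 1 = Nat.succ k from rfl,
    Nat.add_one_mul_choose_eq]
  simp only [Nat.succ_eq_add_one]
  ring

set_option maxHeartbeats 1000000 in
/-- Proposition 2.3 (ii): the sub-Gaussian (Orlicz ψ₂) norm of `U_l(m,N)` satisfies
`√(m(N-m)/(2(N-1)ln 2)) ≤ ‖U_l(m,N)‖_{ψ₂} ≤ m/√(ln 2)`. -/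
theorem subGaussianNorm_U_bounds (N l m : ℕ) (hN : 2 ≤ N) (hl : l ≤ N - 1)
    (hm1 : 1 ≤ m) (hmN : m ≤ N) :
    Real.sqrt ((m : ℝ) * ((N : ℝ) - m) / (2 * ((N : ℝ) - 1) * Real.log 2)) ≤
      sInf {K : ℝ | 0 < K ∧
        ((N.choose m : ℝ))⁻¹ * ∑ S ∈ (Finset.Icc 1 N).powersetCard m,
          Real.exp ((∑ n ∈ S, Real.cos (2 * Real.pi * n * l / N)) ^ 2 / K ^ 2) ≤ 2} ∧
    sInf {K : ℝ | 0 < K ∧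
        ((N.choose m : ℝ))⁻¹ * ∑ S ∈ (Finset.Icc 1 N).powersetCard m,
          Real.exp ((∑ n ∈ S, Real.cos (2 * Real.pi * n * l / N)) ^ 2 / K ^ 2) ≤ 2} ≤
      (m : ℝ) / Real.sqrt (Real.log 2) := by
  classical
  set T : Set ℝ := {K : ℝ | 0 < K ∧
      ((N.choose m : ℝ))⁻¹ * ∑ S ∈ (Finset.Icc 1 N).powersetCard m,
        Real.exp ((∑ n ∈ S, Real.cos (2 * Real.pi * n * l / N)) ^ 2 / K ^ 2) ≤ 2} with hT
  have hNR : (2:ℝ) ≤ (N:ℝ) := by exact_mod_cast hN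
  have hlog : (0:ℝ) < Real.log 2 := Real.log_pos one_lt_two
  have hmR : (1:ℝ) ≤ (m:ℝ) := by exact_mod_cast hm1
  have hmNR : (m:ℝ) ≤ (N:ℝ) := by exact_mod_cast hmN
  have hCpos : (0:ℝ) < (N.choose m : ℝ) := by exact_mod_cast Nat.choose_pos hmN
  have hscard : (Finset.Icc 1 N).card = N := by simp
  have hPcard : ((Finset.Icc 1 N).powersetCard m).card = N.choose m := by
    rw [Finset.card_powersetCard, hscard]
  set a : ℕ → ℝ := fun n => Real.cos (2 * Real.pi * n * l / N) with ha
  -- bound on each sum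
  have habs : ∀ S ∈ (Finset.Icc 1 N).powersetCard m,
      (∑ n ∈ S, a n) ^ 2 ≤ (m:ℝ)^2 := by
    intro S hS
    have hcard : S.card = m := (Finset.mem_powersetCard.1 hS).2
    have h1 : |∑ n ∈ S, a n| ≤ (m:ℝ) := by
      calc |∑ n ∈ S, a n| ≤ ∑ n ∈ S, |a n| := Finset.abs_sum_le_sum_abs _ _
        _ ≤ ∑ _n ∈ S, (1:ℝ) := Finset.sum_le_sum fun n _ => Real.abs_cos_le_one _
        _ = (m:ℝ) := by rw [Finset.sum_const, hcard, nsmul_eq_mul, mul_one]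
    calc (∑ n ∈ S, a n)^2 = |∑ n ∈ S, a n|^2 := (sq_abs _).symm
      _ ≤ (m:ℝ)^2 := by
          apply pow_le_pow_left₀ (abs_nonneg _) h1
  -- K₀ membership
  have hsqlog : (0:ℝ) < Real.sqrt (Real.log 2) := Real.sqrt_pos.2 hlog
  have hK0pos : (0:ℝ) < (m:ℝ) / Real.sqrt (Real.log 2) := by positivity
  have hK0sq : ((m:ℝ) / Real.sqrt (Real.log 2))^2 = (m:ℝ)^2 / Real.log 2 := by
    rw [div_pow, Real.sq_sqrt hlog.le]
  have hK0mem : (m:ℝ) / Real.sqrt (Real.log 2) ∈ T := by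
    rw [hT]
    refine ⟨hK0pos, ?_⟩
    have hsum : ∑ S ∈ (Finset.Icc 1 N).powersetCard m,
        Real.exp ((∑ n ∈ S, a n) ^ 2 / ((m:ℝ) / Real.sqrt (Real.log 2)) ^ 2)
        ≤ (N.choose m : ℝ) * 2 := by
      calc ∑ S ∈ (Finset.Icc 1 N).powersetCard m,
          Real.exp ((∑ n ∈ S, a n) ^ 2 / ((m:ℝ) / Real.sqrt (Real.log 2)) ^ 2)
          ≤ ∑ _S ∈ (Finset.Icc 1 N).powersetCard m, (2:ℝ) := by
            refine Finset.sum_le_sum fun S hS => ?_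
            have hexp : (∑ n ∈ S, a n)^2 / ((m:ℝ) / Real.sqrt (Real.log 2))^2
                ≤ Real.log 2 := by
              have heq : Real.log 2 * ((m:ℝ)^2 / Real.log 2) = (m:ℝ)^2 := by
                field_simp
              rw [hK0sq, div_le_iff₀ (by positivity), heq]
              exact habs S hS
            calc Real.exp ((∑ n ∈ S, a n)^2 / ((m:ℝ) / Real.sqrt (Real.log 2))^2)
                ≤ Real.exp (Real.log 2) := Real.exp_le_exp.2 hexp
              _ = 2 := Real.exp_log (by norm_num)
        _ = (N.choose m : ℝ) * 2 := by
            rw [Finset.sum_const, hPcard, nsmul_eq_mul]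
    calc ((N.choose m : ℝ))⁻¹ * ∑ S ∈ (Finset.Icc 1 N).powersetCard m,
        Real.exp ((∑ n ∈ S, a n) ^ 2 / ((m:ℝ) / Real.sqrt (Real.log 2)) ^ 2)
        ≤ ((N.choose m : ℝ))⁻¹ * ((N.choose m : ℝ) * 2) := by
          exact mul_le_mul_of_nonneg_left hsum (by positivity)
      _ = 2 := by field_simp
  have hbdd : BddBelow T := ⟨0, fun x hx => by
    rw [hT] at hx; exact hx.1.le⟩
  refine ⟨?_, csInf_le hbdd hK0mem⟩
  -- lower bound
  refine le_csInf ⟨_, hK0mem⟩ fun K hK => ?_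
  rw [hT] at hK
  obtain ⟨hKpos, hKle⟩ := hK
  -- Jensen
  have hJ : (∑ S ∈ (Finset.Icc 1 N).powersetCard m, (∑ n ∈ S, a n)^2)
      ≤ Real.log 2 * K^2 * (N.choose m : ℝ) := by
    have hmean := Real.geom_mean_le_arith_mean_weighted
      ((Finset.Icc 1 N).powersetCard m)
      (fun _ => ((N.choose m : ℝ))⁻¹)
      (fun S => Real.exp ((∑ n ∈ S, a n)^2 / K^2))
      (fun _ _ => by positivity)
      (by rw [Finset.sum_const, hPcard, nsmul_eq_mul]; field_simp)
      (fun S _ => (Real.exp_pos _).le)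
    have hlhs : ∏ S ∈ (Finset.Icc 1 N).powersetCard m,
        Real.exp ((∑ n ∈ S, a n)^2 / K^2) ^ ((N.choose m : ℝ))⁻¹
        = Real.exp (∑ S ∈ (Finset.Icc 1 N).powersetCard m,
            (∑ n ∈ S, a n)^2 / K^2 * ((N.choose m : ℝ))⁻¹) := by
      rw [Real.exp_sum]
      exact Finset.prod_congr rfl fun S _ => (Real.exp_mul _ _).symm
    have hrhs : ∑ S ∈ (Finset.Icc 1 N).powersetCard m,
        ((N.choose m : ℝ))⁻¹ * Real.exp ((∑ n ∈ S, a n)^2 / K^2)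
        = ((N.choose m : ℝ))⁻¹ * ∑ S ∈ (Finset.Icc 1 N).powersetCard m,
            Real.exp ((∑ n ∈ S, a n)^2 / K^2) := by
      rw [Finset.mul_sum]
    rw [hlhs, hrhs] at hmean
    have h2 : ∑ S ∈ (Finset.Icc 1 N).powersetCard m,
        (∑ n ∈ S, a n)^2 / K^2 * ((N.choose m : ℝ))⁻¹ ≤ Real.log 2 := by
      have := hmean.trans hKle
      calc ∑ S ∈ (Finset.Icc 1 N).powersetCard m,
          (∑ n ∈ S, a n)^2 / K^2 * ((N.choose m : ℝ))⁻¹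
          = Real.log (Real.exp (∑ S ∈ (Finset.Icc 1 N).powersetCard m,
              (∑ n ∈ S, a n)^2 / K^2 * ((N.choose m : ℝ))⁻¹)) := (Real.log_exp _).symm
        _ ≤ Real.log 2 := Real.log_le_log (Real.exp_pos _) this
    have h3 : (∑ S ∈ (Finset.Icc 1 N).powersetCard m, (∑ n ∈ S, a n)^2)
        / K^2 * ((N.choose m : ℝ))⁻¹ ≤ Real.log 2 := by
      calc (∑ S ∈ (Finset.Icc 1 N).powersetCard m, (∑ n ∈ S, a n)^2)
          / K^2 * ((N.choose m : ℝ))⁻¹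
          = ∑ S ∈ (Finset.Icc 1 N).powersetCard m,
              (∑ n ∈ S, a n)^2 / K^2 * ((N.choose m : ℝ))⁻¹ := by
            rw [Finset.sum_div, Finset.sum_mul]
        _ ≤ Real.log 2 := h2
    have hK2 : (0:ℝ) < K^2 := by positivity
    calc ∑ S ∈ (Finset.Icc 1 N).powersetCard m, (∑ n ∈ S, a n)^2
        = ((∑ S ∈ (Finset.Icc 1 N).powersetCard m, (∑ n ∈ S, a n)^2)
            / K^2 * ((N.choose m : ℝ))⁻¹) * (K^2 * (N.choose m : ℝ)) := by
          field_simp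
      _ ≤ Real.log 2 * (K^2 * (N.choose m : ℝ)) := by
          exact mul_le_mul_of_nonneg_right h3 (by positivity)
      _ = Real.log 2 * K^2 * (N.choose m : ℝ) := by ring
  -- variance lower bound
  obtain ⟨k, rfl⟩ : ∃ k, m = k + 1 := ⟨m - 1, by omega⟩
  set c1 : ℝ := ((N-1).choose k : ℝ) with hc1def
  set D : ℝ := if k = 0 then (0:ℝ) else ((N-2).choose (k-1) : ℝ) with hDdef
  have hc1 : ∀ n ∈ Finset.Icc 1 N,
      (((((Finset.Icc 1 N).powersetCard (k+1))).filter (fun S => n ∈ S)).card : ℝ) = c1 := by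
    intro n hn
    rw [card_filter_mem_powersetCard hn k, hscard]
  have hpair : ∀ n ∈ Finset.Icc 1 N, ∀ n' ∈ (Finset.Icc 1 N).erase n,
      (((((Finset.Icc 1 N).powersetCard (k+1))).filter
        (fun S => n ∈ S ∧ n' ∈ S)).card : ℝ) = D := by
    intro n hn n' hn'
    have hne : n ≠ n' := fun h => (Finset.mem_erase.1 hn').1 h.symm
    rcases Nat.eq_zero_or_pos k with hk | hk
    · subst hk
      rw [card_filter_pair_powersetCard_one hne]
      simp [hDdef]
    · obtain ⟨j, rfl⟩ : ∃ j, k = j + 1 := ⟨k - 1, by omega⟩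
      rw [card_filter_pair_powersetCard hn ((Finset.mem_erase.1 hn').2) hne j, hscard]
      simp [hDdef]
  set A : ℝ := ∑ n ∈ Finset.Icc 1 N, a n with hAdef
  set B : ℝ := ∑ n ∈ Finset.Icc 1 N, a n ^ 2 with hBdef
  have expand : ∀ S : Finset ℕ, (∑ n ∈ S, a n)^2
      = (∑ n ∈ S, a n ^ 2) + ∑ n ∈ S, ∑ n' ∈ S.erase n, a n * a n' := by
    intro S
    rw [sq, Finset.sum_mul_sum, ← Finset.sum_add_distrib]
    refine Finset.sum_congr rfl fun n hn => ?_
    rw [← Finset.add_sum_erase _ (fun n' => a n * a n') hn, pow_two]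
  have hM : ∑ S ∈ (Finset.Icc 1 N).powersetCard (k+1), (∑ n ∈ S, a n)^2
      = c1 * B + D * (A*A - B) := by
    calc ∑ S ∈ (Finset.Icc 1 N).powersetCard (k+1), (∑ n ∈ S, a n)^2
        = ∑ S ∈ (Finset.Icc 1 N).powersetCard (k+1),
            ((∑ n ∈ S, a n ^ 2) + ∑ n ∈ S, ∑ n' ∈ S.erase n, a n * a n') :=
          Finset.sum_congr rfl fun S _ => expand S
      _ = (∑ S ∈ (Finset.Icc 1 N).powersetCard (k+1), ∑ n ∈ S, a n ^ 2)
          + ∑ S ∈ (Finset.Icc 1 N).powersetCard (k+1),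
              ∑ n ∈ S, ∑ n' ∈ S.erase n, a n * a n' := Finset.sum_add_distrib
      _ = (∑ n ∈ Finset.Icc 1 N,
            ((((Finset.Icc 1 N).powersetCard (k+1)).filter (fun S => n ∈ S)).card : ℝ)
              * a n ^ 2)
          + ∑ n ∈ Finset.Icc 1 N, ∑ n' ∈ (Finset.Icc 1 N).erase n,
            ((((Finset.Icc 1 N).powersetCard (k+1)).filter
              (fun S => n ∈ S ∧ n' ∈ S)).card : ℝ) * (a n * a n') := by
          rw [sum_powersetCard_sum, sum_powersetCard_sum_pair]
      _ = c1 * B + D * (A*A - B) := by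
          congr 1
          · rw [hBdef, Finset.mul_sum]
            exact Finset.sum_congr rfl fun n hn => by rw [hc1 n hn]
          · have h4 : ∑ n ∈ Finset.Icc 1 N, ∑ n' ∈ (Finset.Icc 1 N).erase n,
                ((((Finset.Icc 1 N).powersetCard (k+1)).filter
                  (fun S => n ∈ S ∧ n' ∈ S)).card : ℝ) * (a n * a n')
                = D * ∑ n ∈ Finset.Icc 1 N, ∑ n' ∈ (Finset.Icc 1 N).erase n,
                    a n * a n' := by
              rw [Finset.mul_sum]
              refine Finset.sum_congr rfl fun n hn => ?_
              rw [Finset.mul_sum]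
              exact Finset.sum_congr rfl fun n' hn' => by rw [hpair n hn n' hn']
            rw [h4]
            congr 1
            calc ∑ n ∈ Finset.Icc 1 N, ∑ n' ∈ (Finset.Icc 1 N).erase n, a n * a n'
                = ∑ n ∈ Finset.Icc 1 N, a n * (A - a n) := by
                  refine Finset.sum_congr rfl fun n hn => ?_
                  rw [← Finset.mul_sum, Finset.sum_erase_eq_sub hn, ← hAdef]
              _ = A*A - B := by
                  simp only [mul_sub]
                  rw [Finset.sum_sub_distrib, ← Finset.sum_mul, ← hAdef, hBdef]
                  congr 1
                  exact Finset.sum_congr rfl fun n _ => (pow_two (a n)).symm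
  -- value of B
  have hA2val : ∑ n ∈ Finset.Icc 1 N, Real.cos (2 * Real.pi * n * ((2*l : ℕ):ℝ) / N)
      = if N ∣ 2*l then (N:ℝ) else 0 := sum_cos_multiples N (2*l) (by omega)
  have hA2nonneg : 0 ≤ ∑ n ∈ Finset.Icc 1 N,
      Real.cos (2 * Real.pi * n * ((2*l : ℕ):ℝ) / N) := by
    rw [hA2val]
    split_ifs
    · positivity
    · exact le_refl 0
  have hB : B = (N:ℝ)/2 + (∑ n ∈ Finset.Icc 1 N,
      Real.cos (2 * Real.pi * n * ((2*l : ℕ):ℝ) / N))/2 := by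
    rw [hBdef]
    calc ∑ n ∈ Finset.Icc 1 N, a n ^ 2
        = ∑ n ∈ Finset.Icc 1 N,
            (1/2 + Real.cos (2 * Real.pi * n * ((2*l : ℕ):ℝ) / N)/2) := by
          refine Finset.sum_congr rfl fun n _ => ?_
          simp only [ha]
          rw [Real.cos_sq]
          congr 2
          push_cast
          ring
      _ = (N:ℝ)/2 + (∑ n ∈ Finset.Icc 1 N,
            Real.cos (2 * Real.pi * n * ((2*l : ℕ):ℝ) / N))/2 := by
          rw [Finset.sum_add_distrib, Finset.sum_const, hscard, nsmul_eq_mul,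
            ← Finset.sum_div]
          ring
  have hBge : (N:ℝ)/2 ≤ B := by rw [hB]; linarith
  -- choose identities
  have hiN : ((k:ℝ)+1) * (N.choose (k+1) : ℝ) = (N:ℝ) * c1 := by
    have h := choose_identity (N-1) k
    have hN1 : N - 1 + 1 = N := by omega
    rw [hN1] at h
    rw [hc1def]
    exact_mod_cast h.symm
  have hiD : (k:ℝ) * c1 = ((N:ℝ) - 1) * D := by
    rcases Nat.eq_zero_or_pos k with hk | hk
    · subst hk; simp [hDdef]
    · obtain ⟨j, rfl⟩ : ∃ j, k = j + 1 := ⟨k - 1, by omega⟩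
      have h := choose_identity (N-2) j
      have hN2 : N - 2 + 1 = N - 1 := by omega
      rw [hN2] at h
      have hcast : ((N:ℝ) - 1) = ((N - 1 : ℕ) : ℝ) := by
        rw [Nat.cast_sub (by omega)]; norm_num
      rw [hc1def, hDdef, hcast]
      simp only [Nat.add_sub_cancel, if_neg (Nat.succ_ne_zero j)]
      exact_mod_cast h.symm
  have hkey : (c1 - D) * ((N:ℝ) * ((N:ℝ)-1))
      = ((k:ℝ)+1) * ((N:ℝ) - ((k:ℝ)+1)) * (N.choose (k+1) : ℝ) := by
    linear_combination (((k:ℝ)+1) - (N:ℝ)) * hiN + (N:ℝ) * hiD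
  have hDnonneg : (0:ℝ) ≤ D := by
    rcases Nat.eq_zero_or_pos k with hk | hk
    · subst hk; simp [hDdef]
    · rw [hDdef, if_neg (by omega)]; positivity
  have hmk : ((k:ℝ)+1) = ((k+1 : ℕ) : ℝ) := by push_cast; ring
  have hNm : (0:ℝ) ≤ (N:ℝ) - ((k:ℝ)+1) := by
    rw [hmk]; exact sub_nonneg.2 hmNR
  have hc1D : 0 ≤ c1 - D := by
    have h1 : (0:ℝ) < (N:ℝ) * ((N:ℝ)-1) := by nlinarith
    have h2 : c1 - D
        = ((k:ℝ)+1) * ((N:ℝ)-((k:ℝ)+1)) * (N.choose (k+1) : ℝ) / ((N:ℝ)*((N:ℝ)-1)) := by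
      rw [eq_div_iff h1.ne']
      exact hkey
    rw [h2]
    exact div_nonneg (mul_nonneg (mul_nonneg (by positivity) hNm) hCpos.le) h1.le
  have hMge : ((k:ℝ)+1) * ((N:ℝ)-((k:ℝ)+1)) * (N.choose (k+1) : ℝ) / (2*((N:ℝ)-1))
      ≤ ∑ S ∈ (Finset.Icc 1 N).powersetCard (k+1), (∑ n ∈ S, a n)^2 := by
    rw [hM]
    have heq : ((k:ℝ)+1) * ((N:ℝ)-((k:ℝ)+1)) * (N.choose (k+1) : ℝ) / (2*((N:ℝ)-1))
        = (c1 - D) * ((N:ℝ)/2) := by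
      rw [div_eq_iff (by nlinarith : 2*((N:ℝ)-1) ≠ 0)]
      linear_combination -hkey
    rw [heq]
    nlinarith [hBge, hc1D, hDnonneg, mul_self_nonneg A, mul_nonneg hDnonneg (mul_self_nonneg A)]
  -- combine
  have hcomb := hMge.trans hJ
  have h5 : ((k:ℝ)+1) * ((N:ℝ)-((k:ℝ)+1)) / (2*((N:ℝ)-1)) ≤ Real.log 2 * K^2 := by
    have hne : (0:ℝ) < 2*((N:ℝ)-1) := by nlinarith
    rw [div_le_iff₀ hne]
    have := hcomb
    rw [div_le_iff₀ hne] at this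
    nlinarith [this, hCpos]
  have hfin : ((k:ℝ)+1) * ((N:ℝ) - ((k:ℝ)+1)) / (2*((N:ℝ)-1) * Real.log 2) ≤ K^2 := by
    rw [show 2*((N:ℝ)-1) * Real.log 2 = (2*((N:ℝ)-1)) * Real.log 2 from rfl, ← div_div,
      div_le_iff₀ hlog]
    linarith [h5]
  calc Real.sqrt (((k+1:ℕ):ℝ) * ((N:ℝ) - ((k+1:ℕ):ℝ)) / (2*((N:ℝ)-1) * Real.log 2))
      ≤ Real.sqrt (K^2) := Real.sqrt_le_sqrt (by rw [← hmk]; exact hfin)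
    _ = K := Real.sqrt_sq hKpos.le
end
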